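/- arXiv:1210.5322 — 4 statements merged into one kernel-verified Lean document; each statement's English description precedes it below -/
import Mathlib

section
/- Let G be a finite simple graph and let C be a Clar cover of G with exactly n hexagon components. Then the subgraph of the resonance graph R(G) induced by the set V(C) is isomorphic to the n-cube Q_n. In particular V(C) has exactly 2^n elements. -/
open SimpleGraph Polynomial

/-- The `n`-cube `Q_n`: vertices are the functions `Fin n → Bool`, two functions
being adjacent iff they differ in exactly one coordinate. -/
def cubeGraph (n : ℕ) : SimpleGraph (Fin n → Bool) where
  Adj f g := ∃! i, f i ≠ g i
  symm := by
    constructor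
    rintro f g ⟨i, hi, hu⟩
    exact ⟨i, hi.symm, fun j hj => hu j hj.symm⟩
  loopless := by
    constructor
    rintro f ⟨i, hi, -⟩
    exact hi rfl

/-- A perfect matching of `G`, given as a set of edges: a set of pairwise
disjoint edges of `G` covering every vertex, i.e. every vertex of `G` lies in
exactly one edge of `M`. -/
def IsPMSet {V : Type*} (G : SimpleGraph V) (M : Set (Sym2 V)) : Prop :=
  M ⊆ G.edgeSet ∧ ∀ v : V, ∃! e, e ∈ M ∧ v ∈ e

/-- `f : Fin 6 → V` traces a 6-cycle of `G`. -/
def IsHexCycle {V : Type*} (G : SimpleGraph V) (f : Fin 6 → V) : Prop :=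
  Function.Injective f ∧ ∀ i : Fin 6, G.Adj (f i) (f (i + 1))

/-- The edge set of the 6-cycle traced by `f`. -/
def hexEdges {V : Type*} (f : Fin 6 → V) : Set (Sym2 V) :=
  {e | ∃ i : Fin 6, e = s(f i, f (i + 1))}

/-- `E` is the edge set of some 6-cycle of `G`. -/
def IsHexagon {V : Type*} (G : SimpleGraph V) (E : Set (Sym2 V)) : Prop :=
  ∃ f : Fin 6 → V, IsHexCycle G f ∧ E = hexEdges f

lemma IsHexagon.nonempty {V : Type*} {G : SimpleGraph V} {E : Set (Sym2 V)}
    (h : IsHexagon G E) : E.Nonempty := by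
  obtain ⟨f, -, rfl⟩ := h
  exact ⟨s(f 0, f 1), 0, rfl⟩

/-- The resonance graph of `G`: its vertices are the perfect matchings of `G`,
two matchings being adjacent iff their symmetric difference is the edge set of
a 6-cycle of `G`. -/
def resonanceGraph {V : Type*} (G : SimpleGraph V) :
    SimpleGraph {M : Set (Sym2 V) // IsPMSet G M} where
  Adj M N := IsHexagon G (symmDiff M.1 N.1)
  symm := by
    constructor
    intro M N h
    rwa [symmDiff_comm]
  loopless := by
    constructor
    intro M h
    have := h.nonempty
    rw [symmDiff_self] at this
    exact Set.not_nonempty_empty this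

/-- The edge set of a connected component `c` of `H`: all edges of `H` both of
whose endpoints lie in `c`. -/
def compEdges {V : Type*} (H : SimpleGraph V) (c : H.ConnectedComponent) : Set (Sym2 V) :=
  {e | e ∈ H.edgeSet ∧ ∀ v ∈ e, v ∈ c.supp}

/-- The component `c` of `H` is a hexagon, i.e. a cycle of length six. -/
def IsHexComp {V : Type*} (H : SimpleGraph V) (c : H.ConnectedComponent) : Prop :=
  Nonempty (H.induce c.supp ≃g cycleGraph 6)

/-- The component `c` of `H` is a single edge (a copy of `K₂`). -/
def IsEdgeComp {V : Type*} (H : SimpleGraph V) (c : H.ConnectedComponent) : Prop :=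
  Nonempty (H.induce c.supp ≃g (⊤ : SimpleGraph (Fin 2)))

/-- `H` is a Clar cover of `G`: a spanning subgraph of `G` each of whose
connected components is either a 6-cycle (called a hexagon of the cover) or a
single edge. -/
def IsClarCover {V : Type*} (G H : SimpleGraph V) : Prop :=
  H ≤ G ∧ ∀ c : H.ConnectedComponent, IsHexComp H c ∨ IsEdgeComp H c

/-- For a Clar cover `H` of `G`, the set `V(C)` of perfect matchings `M` of `G`
such that every hexagon `h` of `H` is `M`-alternating (i.e. `M ∩ E(h)` is a
perfect matching of the 6-cycle `h`) and every single-edge component of `H` is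
contained in `M`. -/
def clarVC {V : Type*} (G H : SimpleGraph V) : Set {M : Set (Sym2 V) // IsPMSet G M} :=
  {M | (∀ c : H.ConnectedComponent, IsHexComp H c →
          ∀ v ∈ c.supp, ∃! e, e ∈ M.1 ∩ compEdges H c ∧ v ∈ e) ∧
       (∀ c : H.ConnectedComponent, IsEdgeComp H c → compEdges H c ⊆ M.1)}

/-- The number of hexagon components of `H`. -/
noncomputable def hexCount {V : Type*} (H : SimpleGraph V) : ℕ :=
  Nat.card {c : H.ConnectedComponent // IsHexComp H c}

/-!
A perfect matching in `clarVC G H` is forced on every single-edge component of the Clar cover `H`,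
and on every hexagon of `H` it is one of the two alternating perfect matchings of that hexagon;
conversely, one alternating matching per hexagon together with the single edges is a perfect
matching of `G` in `clarVC G H`. So `clarVC G H` is parametrised by `Bool`-valued functions on the
hexagons of `H`. Two such matchings differ exactly on the hexagons where the choices differ, and
distinct hexagons are edge-disjoint, so the symmetric difference has `6k` edges for `k` differing
hexagons: it is a 6-cycle iff `k = 1`, which is adjacency in the cube.
-/

open Function

lemma nonempty_iso_cubeGraph {ι W : Type*} {Γ : SimpleGraph W} {n : ℕ} (κ : ι ≃ Fin n)
    (Φ : (ι → Bool) ≃ W) (hΦ : ∀ a b, Γ.Adj (Φ a) (Φ b) ↔ ∃! i, a i ≠ b i) :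
    Nonempty (Γ ≃g cubeGraph n) := by
  let E : (Fin n → Bool) ≃ W := (κ.arrowCongr (Equiv.refl Bool)).symm.trans Φ
  refine ⟨RelIso.symm ⟨E, fun {a b} => ?_⟩⟩
  exact (hΦ _ _).trans (κ.existsUnique_congr_right (q := fun i => a i ≠ b i))

lemma Function.Injective.existsUnique_image_iff {α β : Type*} {g : α → β} (hg : Injective g)
    (p : α → Prop) (q : β → Prop) :
    (∃! e, (∃ i, p i ∧ e = g i) ∧ q e) ↔ ∃! i, p i ∧ q (g i) := by
  constructor
  · rintro ⟨_, ⟨⟨i, hi, rfl⟩, hq⟩, hu⟩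
    exact ⟨i, ⟨hi, hq⟩, fun j hj => hg (hu _ ⟨⟨j, hj.1, rfl⟩, hj.2⟩)⟩
  · rintro ⟨i, hi, hu⟩
    refine ⟨g i, ⟨⟨i, hi.1, rfl⟩, hi.2⟩, ?_⟩
    rintro _ ⟨⟨j, hj, rfl⟩, hq⟩
    rw [hu j ⟨hj, hq⟩]

section Hexagon

variable {V : Type*} {f : Fin 6 → V}

def hexParity (i : Fin 6) : Bool := decide (i.val % 2 = 1)

def altEdges (f : Fin 6 → V) (b : Bool) : Set (Sym2 V) :=
  {e | ∃ i, hexParity i = b ∧ e = s(f i, f (i + 1))}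

-- The two alternating matchings are the only perfect matchings of the 6-cycle on `Fin 6`.
lemma existsUnique_hexParity_eq (b : Bool) (j : Fin 6) :
    ∃! i : Fin 6, hexParity i = b ∧ (j = i ∨ j = i + 1) := by
  revert b j
  unfold ExistsUnique
  decide

lemma exists_forall_eq_hexParity (t : Fin 6 → Bool)
    (ht : ∀ j : Fin 6, ∃! i, t i = true ∧ (j = i ∨ j = i + 1)) :
    ∃ b, ∀ i, t i = true ↔ hexParity i = b := by
  revert t
  unfold ExistsUnique
  decide

lemma hexEdges_eq_range (f : Fin 6 → V) :
    hexEdges f = Set.range fun i => s(f i, f (i + 1)) := by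
  ext e
  simp [hexEdges, eq_comm]

lemma altEdges_subset_hexEdges (f : Fin 6 → V) (b : Bool) : altEdges f b ⊆ hexEdges f :=
  fun _ ⟨i, _, he⟩ => ⟨i, he⟩

lemma hexEdge_injective (hf : Injective f) : Injective fun i => s(f i, f (i + 1)) := by
  intro i j h
  rcases Sym2.eq_iff.1 h with ⟨h1, -⟩ | ⟨h1, h2⟩
  · exact hf h1
  · have hj : j = i + 1 := hf h2.symm
    rw [hf h1] at hj
    have hne : ∀ k : Fin 6, k ≠ k + 1 + 1 := by decide
    exact absurd hj (hne j)

lemma mem_hexEdge_iff (hf : Injective f) {i j : Fin 6} :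
    f j ∈ s(f i, f (i + 1)) ↔ j = i ∨ j = i + 1 := by
  rw [Sym2.mem_iff, hf.eq_iff, hf.eq_iff]

lemma existsUnique_mem_hexEdge_iff (hf : Injective f) (p : Fin 6 → Prop) (j : Fin 6) :
    (∃! e, (∃ i, p i ∧ e = s(f i, f (i + 1))) ∧ f j ∈ e) ↔
      ∃! i, p i ∧ (j = i ∨ j = i + 1) := by
  rw [(hexEdge_injective hf).existsUnique_image_iff]
  simp only [mem_hexEdge_iff hf]

lemma existsUnique_mem_altEdges (hf : Injective f) (b : Bool) (j : Fin 6) :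
    ∃! e, e ∈ altEdges f b ∧ f j ∈ e :=
  (existsUnique_mem_hexEdge_iff hf _ j).2 (existsUnique_hexParity_eq b j)

lemma exists_eq_altEdges (hf : Injective f) {N : Set (Sym2 V)} (hN : N ⊆ hexEdges f)
    (hcov : ∀ j, ∃! e, e ∈ N ∧ f j ∈ e) : ∃ b, N = altEdges f b := by
  classical
  have hN' : N = {e | ∃ i, s(f i, f (i + 1)) ∈ N ∧ e = s(f i, f (i + 1))} := by
    ext e
    refine ⟨fun he => ?_, fun ⟨i, hi, he⟩ => he ▸ hi⟩
    obtain ⟨i, rfl⟩ := hN he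
    exact ⟨i, he, rfl⟩
  rw [hN'] at hcov ⊢
  obtain ⟨b, hb⟩ := exists_forall_eq_hexParity (fun i => decide (s(f i, f (i + 1)) ∈ N))
    fun j => by simpa using (existsUnique_mem_hexEdge_iff hf _ j).1 (hcov j)
  refine ⟨b, Set.ext fun e => exists_congr fun i => and_congr_left fun _ => ?_⟩
  simpa using hb i

lemma mk_mem_altEdges_iff (hf : Injective f) {i : Fin 6} {b : Bool} :
    s(f i, f (i + 1)) ∈ altEdges f b ↔ hexParity i = b :=
  ⟨fun ⟨_, hk, he⟩ => hexEdge_injective hf he ▸ hk, fun h => ⟨i, h, rfl⟩⟩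

lemma altEdges_injective (hf : Injective f) : Injective (altEdges f) := by
  intro b b' h
  obtain ⟨i, hi⟩ : ∃ i, hexParity i = b := by cases b; exacts [⟨0, rfl⟩, ⟨1, rfl⟩]
  have hmem : s(f i, f (i + 1)) ∈ altEdges f b' := h ▸ (mk_mem_altEdges_iff hf).2 hi
  exact hi.symm.trans ((mk_mem_altEdges_iff hf).1 hmem)

lemma hexEdges_ncard (hf : Injective f) : (hexEdges f).ncard = 6 := by
  rw [hexEdges_eq_range, Set.ncard_range_of_injective (hexEdge_injective hf), Nat.card_fin]

variable {G : SimpleGraph V} {E : Set (Sym2 V)}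

lemma IsHexagon.finite (h : IsHexagon G E) : E.Finite := by
  obtain ⟨f, -, rfl⟩ := h
  rw [hexEdges_eq_range]
  exact Set.finite_range _

lemma IsHexagon.ncard_eq (h : IsHexagon G E) : E.ncard = 6 := by
  obtain ⟨f, hf, rfl⟩ := h
  exact hexEdges_ncard hf.1

end Hexagon

section Components

variable {V : Type*} {H : SimpleGraph V} {c c' : H.ConnectedComponent} {e : Sym2 V} {x y v : V}

lemma mem_compEdges_mk : s(x, y) ∈ compEdges H c ↔ H.Adj x y ∧ x ∈ c.supp := by
  refine ⟨fun h => ⟨h.1, h.2 x (Sym2.mem_mk_left x y)⟩, fun ⟨hxy, hx⟩ => ⟨hxy, ?_⟩⟩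
  intro v hv
  rcases Sym2.mem_iff.1 hv with rfl | rfl
  · exact hx
  · rw [ConnectedComponent.mem_supp_iff, ← ConnectedComponent.connectedComponentMk_eq_of_adj hxy]
    exact hx

lemma mem_compEdges_of_mem (he : e ∈ H.edgeSet) (hv : v ∈ e) (hc : v ∈ c.supp) :
    e ∈ compEdges H c := by
  obtain ⟨w, rfl⟩ := Sym2.mem_iff_exists.1 hv
  exact mem_compEdges_mk.2 ⟨he, hc⟩

lemma exists_mem_compEdges (he : e ∈ H.edgeSet) : ∃ c, e ∈ compEdges H c :=
  ⟨_, mem_compEdges_of_mem he e.out_fst_mem rfl⟩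

lemma eq_of_mem_compEdges (h : e ∈ compEdges H c) (h' : e ∈ compEdges H c') : c = c' :=
  (h.2 _ e.out_fst_mem).symm.trans (h'.2 _ e.out_fst_mem)

lemma range_coe_iso_symm {W : Type*} {K : SimpleGraph W} (ψ : H.induce c.supp ≃g K) :
    Set.range (fun i => (ψ.symm i : V)) = c.supp := by
  ext v
  exact ⟨fun ⟨i, hi⟩ => hi ▸ (ψ.symm i).2, fun hv => ⟨ψ ⟨v, hv⟩, by simp⟩⟩

lemma compEdges_eq_image_edgeSet {W : Type*} {K : SimpleGraph W} (ψ : H.induce c.supp ≃g K) :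
    compEdges H c = Sym2.map (fun i => (ψ.symm i : V)) '' K.edgeSet := by
  ext e
  constructor
  · intro h
    induction e with
    | _ x y =>
      have hx : x ∈ c.supp := h.2 x (Sym2.mem_mk_left x y)
      have hy : y ∈ c.supp := h.2 y (Sym2.mem_mk_right x y)
      exact ⟨s(ψ ⟨x, hx⟩, ψ ⟨y, hy⟩), ψ.map_adj_iff.2 h.1, by simp⟩
  · rintro ⟨e', he', rfl⟩
    induction e' with
    | _ i j => exact mem_compEdges_mk.2 ⟨ψ.symm.map_adj_iff.2 he', (ψ.symm i).2⟩

lemma edgeSet_cycleGraph_six : (cycleGraph 6).edgeSet = Set.range fun i : Fin 6 => s(i, i + 1) := by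
  ext e
  induction e with
  | _ i j =>
    rw [mem_edgeSet]
    revert i j
    decide

lemma edgeSet_top_fin_two : (⊤ : SimpleGraph (Fin 2)).edgeSet = {s(0, 1)} := by
  ext e
  induction e with
  | _ i j =>
    rw [mem_edgeSet]
    revert i j
    decide

lemma IsHexComp.exists_trace (h : IsHexComp H c) :
    ∃ f : Fin 6 → V, Injective f ∧ Set.range f = c.supp ∧ compEdges H c = hexEdges f := by
  obtain ⟨ψ⟩ := h
  refine ⟨fun i => ψ.symm i, Subtype.val_injective.comp ψ.symm.injective,
    range_coe_iso_symm ψ, ?_⟩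
  rw [compEdges_eq_image_edgeSet ψ, edgeSet_cycleGraph_six, ← Set.range_comp, hexEdges_eq_range]
  rfl

lemma IsEdgeComp.existsUnique_mem_compEdges (h : IsEdgeComp H c) (hv : v ∈ c.supp) :
    ∃! e, e ∈ compEdges H c ∧ v ∈ e := by
  obtain ⟨ψ⟩ := h
  rw [compEdges_eq_image_edgeSet ψ, edgeSet_top_fin_two, Set.image_singleton, Sym2.map_mk]
  obtain ⟨i, rfl⟩ := (range_coe_iso_symm ψ).symm ▸ hv
  refine ⟨_, ⟨rfl, ?_⟩, fun e he => he.1⟩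
  fin_cases i
  exacts [Sym2.mem_mk_left _ _, Sym2.mem_mk_right _ _]

lemma IsHexComp.not_isEdgeComp (h : IsHexComp H c) : ¬IsEdgeComp H c := by
  rintro ⟨ψ⟩
  obtain ⟨φ⟩ := h
  simpa using Fintype.card_congr (φ.toEquiv.symm.trans ψ.toEquiv)

end Components

section ClarCover

variable {V : Type*} {G H : SimpleGraph V}

abbrev HexComponent (H : SimpleGraph V) := {c : H.ConnectedComponent // IsHexComp H c}

noncomputable def hexTrace (c : HexComponent H) : Fin 6 → V := c.2.exists_trace.choose

lemma hexTrace_injective (c : HexComponent H) : Injective (hexTrace c) :=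
  c.2.exists_trace.choose_spec.1

lemma range_hexTrace (c : HexComponent H) : Set.range (hexTrace c) = c.1.supp :=
  c.2.exists_trace.choose_spec.2.1

lemma compEdges_eq_hexEdges (c : HexComponent H) : compEdges H c = hexEdges (hexTrace c) :=
  c.2.exists_trace.choose_spec.2.2

lemma isHexagon_compEdges (hHG : H ≤ G) (c : HexComponent H) : IsHexagon G (compEdges H c) := by
  refine ⟨hexTrace c, ⟨hexTrace_injective c, fun i => hHG ?_⟩, compEdges_eq_hexEdges c⟩
  have hi : s(hexTrace c i, hexTrace c (i + 1)) ∈ compEdges H c := by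
    rw [compEdges_eq_hexEdges]
    exact ⟨i, rfl⟩
  exact hi.1

lemma isHexagon_biUnion_compEdges_iff (hHG : H ≤ G) (S : Set (HexComponent H)) :
    IsHexagon G (⋃ c ∈ S, compEdges H c) ↔ ∃! c, c ∈ S := by
  constructor
  · intro hS
    obtain ⟨e, he⟩ := hS.nonempty
    obtain ⟨c, hc, -⟩ := Set.mem_iUnion₂.1 he
    refine ⟨c, hc, fun c' hc' => by_contra fun hne => ?_⟩
    have hdisj : Disjoint (compEdges H c') (compEdges H c) :=
      Set.disjoint_left.2 fun _ h h' => hne (Subtype.ext (eq_of_mem_compEdges h h'))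
    have hsub : compEdges H c' ∪ compEdges H c ⊆ ⋃ c ∈ S, compEdges H c :=
      Set.union_subset (Set.subset_iUnion₂ (s := fun c (_ : c ∈ S) => compEdges H c) c' hc')
        (Set.subset_iUnion₂ (s := fun c (_ : c ∈ S) => compEdges H c) c hc)
    have hle := Set.ncard_le_ncard hsub hS.finite
    rw [Set.ncard_union_eq hdisj (isHexagon_compEdges hHG c').finite
      (isHexagon_compEdges hHG c).finite, (isHexagon_compEdges hHG c').ncard_eq,
      (isHexagon_compEdges hHG c).ncard_eq, hS.ncard_eq] at hle
    omega
  · rintro ⟨c, hc, hu⟩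
    rw [(Set.eq_singleton_iff_unique_mem.2 ⟨hc, hu⟩ : S = {c}), Set.biUnion_singleton]
    exact isHexagon_compEdges hHG c

lemma isPMSet_of_subset_edgeSet (hHG : H ≤ G) {M : Set (Sym2 V)} (hM : M ⊆ H.edgeSet)
    (hcov : ∀ c : H.ConnectedComponent, ∀ v ∈ c.supp,
      ∃! e, e ∈ M ∩ compEdges H c ∧ v ∈ e) :
    IsPMSet G M := by
  refine ⟨hM.trans (edgeSet_mono hHG), fun v => ?_⟩
  refine (existsUnique_congr fun e => ?_).1 (hcov _ v rfl)
  exact ⟨fun h => ⟨h.1.1, h.2⟩,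
    fun h => ⟨⟨h.1, mem_compEdges_of_mem (hM h.1) h.2 rfl⟩, h.2⟩⟩

lemma subset_edgeSet_of_mem_clarVC (hH : IsClarCover G H) {M : {M // IsPMSet G M}}
    (hM : M ∈ clarVC G H) : M.1 ⊆ H.edgeSet := by
  intro e he
  set v := e.out.1
  set c := H.connectedComponentMk v
  obtain ⟨e', ⟨he'M, he'c⟩, hve'⟩ : ∃ e', e' ∈ M.1 ∩ compEdges H c ∧ v ∈ e' := by
    rcases hH.2 c with hc | hc
    · exact (hM.1 c hc v rfl).exists
    · obtain ⟨e', ⟨he'c, hve'⟩, -⟩ := hc.existsUnique_mem_compEdges (v := v) rfl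
      exact ⟨e', ⟨hM.2 c hc he'c, he'c⟩, hve'⟩
  rw [(M.2.2 v).unique ⟨he, e.out_fst_mem⟩ ⟨he'M, hve'⟩]
  exact he'c.1

def clarMatching (b : HexComponent H → Bool) : Set (Sym2 V) :=
  {e ∈ H.edgeSet |
    ∀ c : HexComponent H, e ∈ compEdges H c → e ∈ altEdges (hexTrace c) (b c)}

variable {b b' : HexComponent H → Bool} {e : Sym2 V}

lemma clarMatching_inter_compEdges (c : HexComponent H) :
    clarMatching b ∩ compEdges H c = altEdges (hexTrace c) (b c) := by
  refine Set.Subset.antisymm (fun e he => he.1.2 c he.2) fun e he => ?_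
  have hc : e ∈ compEdges H c :=
    (compEdges_eq_hexEdges c).symm ▸ altEdges_subset_hexEdges _ _ he
  refine ⟨⟨hc.1, fun c' hc' => ?_⟩, hc⟩
  rwa [← Subtype.ext (eq_of_mem_compEdges hc hc')]

lemma mem_clarMatching_iff (c : HexComponent H) (hc : e ∈ compEdges H c) :
    e ∈ clarMatching b ↔ e ∈ altEdges (hexTrace c) (b c) := by
  rw [← clarMatching_inter_compEdges]
  exact ⟨fun h => ⟨h, hc⟩, And.left⟩

lemma compEdges_subset_clarMatching {c : H.ConnectedComponent} (hc : ¬IsHexComp H c) :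
    compEdges H c ⊆ clarMatching b := fun _ he =>
  ⟨he.1, fun c' hc' => absurd (eq_of_mem_compEdges he hc' ▸ c'.2) hc⟩

lemma existsUnique_mem_clarMatching_inter (hH : IsClarCover G H) {c : H.ConnectedComponent}
    {v : V} (hv : v ∈ c.supp) : ∃! e, e ∈ clarMatching b ∩ compEdges H c ∧ v ∈ e := by
  by_cases hc : IsHexComp H c
  · lift c to HexComponent H using hc
    rw [clarMatching_inter_compEdges]
    obtain ⟨j, rfl⟩ := (range_hexTrace c).symm ▸ hv
    exact existsUnique_mem_altEdges (hexTrace_injective c) _ j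
  · rw [Set.inter_eq_right.2 (compEdges_subset_clarMatching hc)]
    exact ((hH.2 c).resolve_left hc).existsUnique_mem_compEdges hv

lemma isPMSet_clarMatching (hH : IsClarCover G H) : IsPMSet G (clarMatching b) :=
  isPMSet_of_subset_edgeSet hH.1 (Set.sep_subset _ _) fun _ _ hv =>
    existsUnique_mem_clarMatching_inter hH hv

lemma clarMatching_mem_clarVC (hH : IsClarCover G H) :
    ⟨clarMatching b, isPMSet_clarMatching hH⟩ ∈ clarVC G H :=
  ⟨fun _ _ _ hv => existsUnique_mem_clarMatching_inter hH hv,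
    fun _ hc => compEdges_subset_clarMatching fun h => h.not_isEdgeComp hc⟩

lemma clarMatching_injective : Injective (clarMatching (H := H)) := by
  intro b b' h
  funext c
  apply altEdges_injective (hexTrace_injective c)
  rw [← clarMatching_inter_compEdges, h, clarMatching_inter_compEdges]

lemma exists_clarMatching_eq (hH : IsClarCover G H) {M : {M // IsPMSet G M}}
    (hM : M ∈ clarVC G H) : ∃ b : HexComponent H → Bool, clarMatching b = M.1 := by
  have hloc (c : HexComponent H) : ∃ bc, M.1 ∩ compEdges H c = altEdges (hexTrace c) bc :=
    exists_eq_altEdges (hexTrace_injective c)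
      (Set.inter_subset_right.trans (compEdges_eq_hexEdges c).subset)
      fun j => hM.1 c c.2 _ (range_hexTrace c ▸ ⟨j, rfl⟩)
  choose b hb using hloc
  refine ⟨b, Set.ext fun e => ⟨fun he => ?_, fun he => ?_⟩⟩
  · obtain ⟨c, hc⟩ := exists_mem_compEdges he.1
    by_cases hhex : IsHexComp H c
    · lift c to HexComponent H using hhex
      have heM : e ∈ M.1 ∩ compEdges H c := by rw [hb c]; exact he.2 c hc
      exact heM.1
    · exact hM.2 c ((hH.2 c).resolve_left hhex) hc
  · refine ⟨subset_edgeSet_of_mem_clarVC hH hM he, fun c hc => ?_⟩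
    rw [← hb c]
    exact ⟨he, hc⟩

lemma symmDiff_clarMatching :
    symmDiff (clarMatching b) (clarMatching b') = ⋃ c ∈ {c | b c ≠ b' c}, compEdges H c := by
  ext e
  rw [Set.mem_symmDiff, Set.mem_iUnion₂]
  constructor
  · intro he
    have hE : e ∈ H.edgeSet := by rcases he with ⟨h, -⟩ | ⟨h, -⟩ <;> exact h.1
    obtain ⟨c, hc⟩ := exists_mem_compEdges hE
    by_cases hhex : IsHexComp H c
    · lift c to HexComponent H using hhex
      refine ⟨c, fun hbc => ?_, hc⟩
      rw [mem_clarMatching_iff c hc, mem_clarMatching_iff c hc, hbc] at he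
      tauto
    · have hmem := compEdges_subset_clarMatching (b := b) hhex hc
      have hmem' := compEdges_subset_clarMatching (b := b') hhex hc
      tauto
  · rintro ⟨c, hbc, hc⟩
    obtain ⟨i, rfl⟩ := compEdges_eq_hexEdges c ▸ hc
    rw [mem_clarMatching_iff c hc, mem_clarMatching_iff c hc,
      mk_mem_altEdges_iff (hexTrace_injective c), mk_mem_altEdges_iff (hexTrace_injective c)]
    change b c ≠ b' c at hbc
    revert hbc
    cases b c <;> cases b' c <;> cases hexParity i <;> decide

noncomputable def clarEquiv (hH : IsClarCover G H) : (HexComponent H → Bool) ≃ clarVC G H :=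
  Equiv.ofBijective
    (fun b => ⟨⟨clarMatching b, isPMSet_clarMatching hH⟩, clarMatching_mem_clarVC hH⟩)
    ⟨fun _ _ h => clarMatching_injective (congrArg (fun M => M.1.1) h),
      fun ⟨_, hM⟩ =>
        (exists_clarMatching_eq hH hM).imp fun _ hb => Subtype.ext (Subtype.ext hb)⟩

lemma clarEquiv_adj_iff (hH : IsClarCover G H) (b b' : HexComponent H → Bool) :
    ((resonanceGraph G).induce (clarVC G H)).Adj (clarEquiv hH b) (clarEquiv hH b') ↔
      ∃! c, b c ≠ b' c := by
  change IsHexagon G (symmDiff (clarMatching b) (clarMatching b')) ↔ _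
  rw [symmDiff_clarMatching]
  exact isHexagon_biUnion_compEdges_iff hH.1 _

end ClarCover

/-- If `C` is a Clar cover of a finite simple graph `G` with
exactly `n` hexagon components, then the subgraph of the resonance graph
`R(G)` induced by `V(C)` is isomorphic to the `n`-cube `Q_n`; in particular
`V(C)` has exactly `2ⁿ` elements. -/
theorem clarVC_induces_cube {V : Type*} [Fintype V] (G H : SimpleGraph V)
    (hH : IsClarCover G H) (n : ℕ) (hn : hexCount H = n) :
    Nonempty ((resonanceGraph G).induce (clarVC G H) ≃g cubeGraph n) ∧
      (clarVC G H).ncard = 2 ^ n := by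
  have κ : HexComponent H ≃ Fin n := (Finite.equivFin _).trans (finCongr hn)
  refine ⟨nonempty_iso_cubeGraph κ (clarEquiv hH) (clarEquiv_adj_iff hH), ?_⟩
  rw [← Nat.card_coe_set_eq, ← Nat.card_congr (clarEquiv hH), Nat.card_fun,
    Nat.card_eq_fintype_card (α := Bool), Fintype.card_bool]
  exact congrArg _ hn
end

section
/- Let G be a finite simple graph and s a positive integer. Then the s-th derivative of the Clar covering polynomial of G satisfies ζ^{(s)}(G,x) = s! · Σ_R ζ(G − V(R), x), where the summation runs over all s-element sets R of pairwise vertex-disjoint 6-cycles of G, and G − V(R) denotes the graph obtained from G by deleting all vertices lying on the cycles of R together with all incident edges. -/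
open SimpleGraph Polynomial

/-- `z(G,k)`: the number of Clar covers of `G` with exactly `k` hexagon
components. -/
noncomputable def clarCount {V : Type*} (G : SimpleGraph V) (k : ℕ) : ℕ :=
  Nat.card {H : SimpleGraph V // IsClarCover G H ∧ hexCount H = k}

/-- The Clar covering polynomial `ζ(G,x) = Σ_k z(G,k)·xᵏ` of `G`.  (A Clar
cover with `k` hexagons has `6k` vertices, so `z(G,k) = 0` for `k > |V|` and
the range of summation captures all nonzero terms.) -/
noncomputable def clarPoly {V : Type*} (G : SimpleGraph V) : Polynomial ℤ :=
  ∑ k ∈ Finset.range (Nat.card V + 1), Polynomial.C (clarCount G k : ℤ) * Polynomial.X ^ k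

/-- The set of vertices lying on an edge of `E`. -/
def edgeSupp {V : Type*} (E : Set (Sym2 V)) : Set V :=
  {v | ∃ e ∈ E, v ∈ e}

/-!
Differentiating `ζ(G,x) = Σ_k z(G,k) xᵏ` turns the coefficient of `xᵏ` into `(k+1)·z(G,k+1)`,
the number of Clar covers with `k+1` hexagons together with a marked hexagon component.
Deleting the marked hexagon `E` is a bijection onto the Clar covers of `G − V(E)` with `k`
hexagons (gluing `E` back in inverts it), so `ζ'(G) = Σ_E ζ(G − V(E))`.
Applying this to `G − V(R)` for each set `R` of `s` disjoint hexagons, and noting that every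
set of `s+1` disjoint hexagons arises from exactly `s+1` pairs `(R, E)`, gives
`(Σ_{|R|=s} ζ(G − V(R)))' = (s+1) · Σ_{|R|=s+1} ζ(G − V(R))`; induction on `s` produces `s!`.
-/

section

variable {V W : Type*}

lemma SimpleGraph.Iso.nonempty_iso_congr_left {U X Y : Type*} {A : SimpleGraph U}
    {B : SimpleGraph X} {C : SimpleGraph Y} (φ : A ≃g B) :
    Nonempty (A ≃g C) ↔ Nonempty (B ≃g C) :=
  ⟨fun ⟨ψ⟩ => ⟨φ.symm.trans ψ⟩, fun ⟨ψ⟩ => ⟨φ.trans ψ⟩⟩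

section Isomorphism

variable {H G : SimpleGraph V} {H' G' : SimpleGraph W}

def SimpleGraph.Iso.induceSupp (φ : H ≃g H') (c : H.ConnectedComponent) :
    H.induce c.supp ≃g H'.induce (φ.connectedComponentEquiv c).supp where
  toEquiv := ConnectedComponent.isoEquivSupp φ c
  map_rel_iff' := φ.map_rel_iff

lemma isHexComp_iff_of_iso (φ : H ≃g H') (c : H.ConnectedComponent) :
    IsHexComp H c ↔ IsHexComp H' (φ.connectedComponentEquiv c) :=
  (φ.induceSupp c).nonempty_iso_congr_left

lemma isEdgeComp_iff_of_iso (φ : H ≃g H') (c : H.ConnectedComponent) :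
    IsEdgeComp H c ↔ IsEdgeComp H' (φ.connectedComponentEquiv c) :=
  (φ.induceSupp c).nonempty_iso_congr_left

lemma hexCount_eq_of_iso (φ : H ≃g H') : hexCount H = hexCount H' :=
  Nat.card_congr (φ.connectedComponentEquiv.subtypeEquiv (isHexComp_iff_of_iso φ))

lemma isClarCover_iff_of_iso (φ : G ≃g G') (ψ : H ≃g H') (hψ : ∀ v, ψ v = φ v) :
    IsClarCover G H ↔ IsClarCover G' H' := by
  have hle : H ≤ G ↔ H' ≤ G' := by
    refine ⟨fun h u v huv => ?_, fun h u v huv => ?_⟩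
    · obtain ⟨u, rfl⟩ := φ.surjective u
      obtain ⟨v, rfl⟩ := φ.surjective v
      rw [← hψ, ← hψ, ψ.map_adj_iff] at huv
      exact φ.map_adj_iff.2 (h huv)
    · rw [← ψ.map_adj_iff, hψ, hψ] at huv
      exact φ.map_adj_iff.1 (h huv)
  rw [IsClarCover, IsClarCover, hle, ψ.connectedComponentEquiv.forall_congr_left]
  simp only [isHexComp_iff_of_iso ψ, isEdgeComp_iff_of_iso ψ, Equiv.apply_symm_apply]

lemma clarCount_eq_of_iso (φ : G ≃g G') (k : ℕ) : clarCount G k = clarCount G' k :=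
  Nat.card_congr <| φ.toEquiv.simpleGraph.subtypeEquiv fun H => by
    let ψ : H ≃g φ.toEquiv.simpleGraph H := (Iso.comap φ.toEquiv.symm H).symm
    rw [isClarCover_iff_of_iso φ ψ fun _ => rfl, hexCount_eq_of_iso ψ]

lemma clarPoly_eq_of_iso (φ : G ≃g G') : clarPoly G = clarPoly G' := by
  simp only [clarPoly, Nat.card_congr φ.toEquiv, clarCount_eq_of_iso φ]

noncomputable def SimpleGraph.induceInduceIso (G : SimpleGraph V) (S : Set V) (T : Set S) :
    (G.induce S).induce T ≃g G.induce (Subtype.val '' T) where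
  toEquiv := Equiv.Set.image _ T Subtype.val_injective
  map_rel_iff' := Iff.rfl

end Isomorphism

section RemoveComponent

variable {H : SimpleGraph V} (c₀ : H.ConnectedComponent)

lemma reachable_induce_compl_supp_iff {a b : ↥c₀.suppᶜ} :
    (H.induce c₀.suppᶜ).Reachable a b ↔ H.Reachable a b := by
  classical
  refine ⟨fun h => by simpa using h.map (Embedding.induce _).toHom, fun ⟨p⟩ => ?_⟩
  have hp : ∀ x ∈ p.support, x ∈ c₀.suppᶜ := fun x hx hx₀ =>
    a.2 ((ConnectedComponent.sound (p.takeUntil x hx).reachable).trans hx₀)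
  exact ⟨p.induce _ hp⟩

lemma supp_map_induce_compl_supp (c : (H.induce c₀.suppᶜ).ConnectedComponent) :
    (c.map (Embedding.induce c₀.suppᶜ).toHom).supp = Subtype.val '' c.supp := by
  induction c using ConnectedComponent.ind with | h a
  ext v
  simp only [ConnectedComponent.map_mk, ConnectedComponent.mem_supp_iff, ConnectedComponent.eq,
    Set.mem_image]
  refine ⟨fun h => ?_, ?_⟩
  · have hv : v ∈ c₀.suppᶜ := fun hv => a.2 ((ConnectedComponent.sound h.symm).trans hv)
    exact ⟨⟨v, hv⟩, (reachable_induce_compl_supp_iff c₀).2 h, rfl⟩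
  · rintro ⟨b, hb, rfl⟩
    exact (reachable_induce_compl_supp_iff c₀).1 hb

noncomputable def componentComplEquiv :
    (H.induce c₀.suppᶜ).ConnectedComponent ≃ {c : H.ConnectedComponent // c ≠ c₀} := by
  refine Equiv.ofBijective (fun c => ⟨c.map (Embedding.induce _).toHom, fun h => ?_⟩) ⟨?_, ?_⟩
  · obtain ⟨a, ha⟩ := c.nonempty_supp
    have ha' : a.1 ∈ (c.map (Embedding.induce _).toHom).supp :=
      supp_map_induce_compl_supp c₀ c ▸ Set.mem_image_of_mem Subtype.val ha
    rw [h] at ha'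
    exact a.2 ha'
  · intro c c' h
    induction c, c' using ConnectedComponent.ind₂ with | h a b
    simp only [Subtype.mk.injEq, ConnectedComponent.map_mk, ConnectedComponent.eq] at h ⊢
    exact (reachable_induce_compl_supp_iff c₀).2 h
  · rintro ⟨c, hc⟩
    obtain ⟨v, rfl⟩ := c.exists_rep
    exact ⟨(H.induce c₀.suppᶜ).connectedComponentMk ⟨v, hc⟩, rfl⟩

lemma supp_componentComplEquiv (c : (H.induce c₀.suppᶜ).ConnectedComponent) :
    (componentComplEquiv c₀ c : H.ConnectedComponent).supp = Subtype.val '' c.supp :=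
  supp_map_induce_compl_supp c₀ c

lemma nonempty_iso_induce_compl_supp_iff {U : Type*} {X : SimpleGraph U}
    (c : (H.induce c₀.suppᶜ).ConnectedComponent) :
    Nonempty ((H.induce c₀.suppᶜ).induce c.supp ≃g X) ↔
      Nonempty (H.induce (componentComplEquiv c₀ c : H.ConnectedComponent).supp ≃g X) := by
  rw [supp_componentComplEquiv]
  exact (H.induceInduceIso _ _).nonempty_iso_congr_left

lemma hexCount_eq_hexCount_induce_compl_supp_add_one [Finite V] (hc₀ : IsHexComp H c₀) :
    hexCount H = hexCount (H.induce c₀.suppᶜ) + 1 := by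
  let e : {c // IsHexComp (H.induce c₀.suppᶜ) c} ≃ {c // IsHexComp H c ∧ c ≠ c₀} :=
    ((componentComplEquiv c₀).subtypeEquiv fun c => nonempty_iso_induce_compl_supp_iff c₀ c).trans
      ((Equiv.subtypeSubtypeEquivSubtypeInter _ (IsHexComp H)).trans
        (Equiv.subtypeEquivRight fun _ => and_comm))
  rw [hexCount, hexCount, Nat.card_congr e]
  change Nat.card {c | IsHexComp H c} = Nat.card ↥({c | IsHexComp H c} \ {c₀}) + 1
  rw [Nat.card_coe_set_eq, Nat.card_coe_set_eq,
    Set.ncard_sdiff_singleton_add_one (s := {c | IsHexComp H c}) hc₀]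

lemma forall_isHexComp_or_isEdgeComp_iff :
    (∀ c, IsHexComp H c ∨ IsEdgeComp H c) ↔ (IsHexComp H c₀ ∨ IsEdgeComp H c₀) ∧
      ∀ c, IsHexComp (H.induce c₀.suppᶜ) c ∨ IsEdgeComp (H.induce c₀.suppᶜ) c := by
  have hrest : (∀ c, IsHexComp (H.induce c₀.suppᶜ) c ∨ IsEdgeComp (H.induce c₀.suppᶜ) c) ↔
      ∀ c : {c // c ≠ c₀}, IsHexComp H c ∨ IsEdgeComp H c :=
    (componentComplEquiv c₀).forall_congr fun c => by
      simp only [IsHexComp, IsEdgeComp, nonempty_iso_induce_compl_supp_iff]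
  rw [hrest, Subtype.forall]
  refine ⟨fun h => ⟨h c₀, fun c _ => h c⟩, fun ⟨h₀, h⟩ c => ?_⟩
  by_cases hc : c = c₀
  exacts [hc ▸ h₀, h c hc]

end RemoveComponent

section Hexagons

lemma cycleGraph_six_adj_iff {a b : Fin 6} : (cycleGraph 6).Adj a b ↔ b = a + 1 ∨ a = b + 1 := by
  refine (cycleGraph_adj (n := 4)).trans ?_
  rw [sub_eq_iff_eq_add, sub_eq_iff_eq_add, add_comm 1 b, add_comm 1 a, or_comm]

lemma cycleGraph_six_adj_add_one (a : Fin 6) : (cycleGraph 6).Adj a (a + 1) :=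
  cycleGraph_six_adj_iff.2 (Or.inl rfl)

lemma edgeSupp_hexEdges (f : Fin 6 → V) : edgeSupp (hexEdges f) = Set.range f := by
  ext v
  constructor
  · rintro ⟨e, ⟨i, rfl⟩, hv⟩
    rcases Sym2.mem_iff.1 hv with rfl | rfl
    exacts [⟨i, rfl⟩, ⟨i + 1, rfl⟩]
  · rintro ⟨i, rfl⟩
    exact ⟨s(f i, f (i + 1)), ⟨i, rfl⟩, Sym2.mem_mk_left _ _⟩

lemma mk_mem_hexEdges_iff {f : Fin 6 → V} (hf : Function.Injective f) {a b : Fin 6} :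
    s(f a, f b) ∈ hexEdges f ↔ (cycleGraph 6).Adj a b := by
  rw [cycleGraph_six_adj_iff]
  constructor
  · rintro ⟨i, hi⟩
    rcases Sym2.eq_iff.1 hi with ⟨h₁, h₂⟩ | ⟨h₁, h₂⟩
    · left; rw [hf h₁, hf h₂]
    · right; rw [hf h₁, hf h₂]
  · rintro (rfl | rfl)
    exacts [⟨a, rfl⟩, ⟨b, Sym2.eq_swap⟩]

lemma IsHexagon.edgeSupp_nonempty {G : SimpleGraph V} {E : Set (Sym2 V)} (hE : IsHexagon G E) :
    (edgeSupp E).Nonempty := by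
  obtain ⟨f, -, rfl⟩ := hE
  exact edgeSupp_hexEdges f ▸ Set.range_nonempty f

variable {X : SimpleGraph V} {c : X.ConnectedComponent}

lemma isHexCycle_of_embedding (φ : cycleGraph 6 ↪g X) : IsHexCycle X φ :=
  ⟨φ.injective, fun i => φ.map_adj_iff.2 (cycleGraph_six_adj_add_one i)⟩

lemma isHexComp_of_range_eq (φ : cycleGraph 6 ↪g X) (hφ : Set.range φ = c.supp) :
    IsHexComp X c :=
  ⟨(hφ ▸ φ.isoInduceRange).symm⟩

lemma compEdges_eq_hexEdges_s6 (φ : cycleGraph 6 ↪g X) (hφ : Set.range φ = c.supp) :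
    compEdges X c = hexEdges φ := by
  ext e
  induction e using Sym2.ind with | h u v
  simp only [compEdges, ← hφ, Set.mem_ofPred_eq]
  constructor
  · rintro ⟨huv, hmem⟩
    obtain ⟨a, rfl⟩ := hmem u (Sym2.mem_mk_left _ _)
    obtain ⟨b, rfl⟩ := hmem v (Sym2.mem_mk_right _ _)
    exact (mk_mem_hexEdges_iff φ.injective).2 (φ.map_adj_iff.1 (X.mem_edgeSet.1 huv))
  · rintro ⟨i, hi⟩
    rw [hi]
    refine ⟨X.mem_edgeSet.2 ((isHexCycle_of_embedding φ).2 i), fun w hw => ?_⟩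
    exact edgeSupp_hexEdges φ ▸ ⟨_, ⟨i, rfl⟩, hw⟩

lemma IsHexComp.exists_embedding (hc : IsHexComp X c) :
    ∃ φ : cycleGraph 6 ↪g X, Set.range φ = c.supp := by
  obtain ⟨ψ⟩ := hc
  refine ⟨(Embedding.induce c.supp).comp ψ.symm.toEmbedding, ?_⟩
  ext v
  simp only [RelEmbedding.coe_trans, Set.mem_range, Function.comp_apply]
  exact ⟨fun ⟨y, hy⟩ => hy ▸ (ψ.symm y).2,
    fun hv => ⟨ψ ⟨v, hv⟩, congrArg Subtype.val (ψ.symm_apply_apply _)⟩⟩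

lemma IsHexComp.edgeSupp_compEdges (hc : IsHexComp X c) : edgeSupp (compEdges X c) = c.supp := by
  obtain ⟨φ, hφ⟩ := hc.exists_embedding
  rw [compEdges_eq_hexEdges_s6 φ hφ, edgeSupp_hexEdges, hφ]

lemma IsHexComp.isHexagon_compEdges {G : SimpleGraph V} (hc : IsHexComp X c) (hle : X ≤ G) :
    IsHexagon G (compEdges X c) := by
  obtain ⟨φ, hφ⟩ := hc.exists_embedding
  obtain ⟨hinj, hadj⟩ := isHexCycle_of_embedding φ
  exact ⟨φ, ⟨hinj, fun i => hle (hadj i)⟩, compEdges_eq_hexEdges_s6 φ hφ⟩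

end Hexagons

lemma SimpleGraph.Reachable.mem_of_adj_closed {X : SimpleGraph V} {S : Set V}
    (hS : ∀ ⦃u v⦄, X.Adj u v → u ∈ S → v ∈ S) {u v : V} (h : X.Reachable u v) (hu : u ∈ S) :
    v ∈ S := by
  obtain ⟨p⟩ := h
  induction p with
  | nil => exact hu
  | cons huw _ ih => exact ih (hS huw hu)

lemma reachable_of_adj_add_one {n : ℕ} {X : SimpleGraph V} {f : Fin (n + 1) → V}
    (hf : ∀ i, X.Adj (f i) (f (i + 1))) (j : Fin (n + 1)) : X.Reachable (f 0) (f j) := by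
  induction j using Fin.induction with
  | zero => rfl
  | succ i ih => exact ih.trans (Fin.coeSucc_eq_succ (a := i) ▸ hf i.castSucc).reachable

section AttachHexagon

def attachHexagon (E : Set (Sym2 V)) (H : SimpleGraph {v | v ∉ edgeSupp E}) : SimpleGraph V :=
  fromEdgeSet E ⊔ H.spanningCoe

variable {G : SimpleGraph V} {E : Set (Sym2 V)} {H : SimpleGraph {v | v ∉ edgeSupp E}}

lemma attachHexagon_adj_of_mem_edgeSupp {u v : V} (hu : u ∈ edgeSupp E) :
    (attachHexagon E H).Adj u v ↔ s(u, v) ∈ E ∧ u ≠ v := by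
  simp [attachHexagon, hu]

lemma induce_attachHexagon : (attachHexagon E H).induce {v | v ∉ edgeSupp E} = H := by
  ext u v
  have huv : s(u.1, v.1) ∉ E := fun h => u.2 ⟨_, h, Sym2.mem_mk_left _ _⟩
  change (fromEdgeSet E).Adj u v ∨ H.spanningCoe.Adj u v ↔ H.Adj u v
  rw [fromEdgeSet_adj, or_iff_right fun h => huv h.1]
  exact map_adj_apply

lemma IsHexagon.subset_edgeSet (hE : IsHexagon G E) : E ⊆ G.edgeSet := by
  obtain ⟨f, hf, rfl⟩ := hE
  rintro _ ⟨i, rfl⟩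
  exact hf.2 i

lemma attachHexagon_le (hE : IsHexagon G E) (hH : H ≤ G.induce {v | v ∉ edgeSupp E}) :
    attachHexagon E H ≤ G :=
  sup_le (fromEdgeSet_edgeSet (G := G) ▸ fromEdgeSet_mono hE.subset_edgeSet)
    ((map_monotone _ hH).trans (G.spanningCoe_induce_le _))

end AttachHexagon

section AttachHexagonCycle

variable {G : SimpleGraph V} {f : Fin 6 → V}

def attachHexagonEmbedding (hf : Function.Injective f)
    (H : SimpleGraph {v | v ∉ edgeSupp (hexEdges f)}) :
    cycleGraph 6 ↪g attachHexagon (hexEdges f) H where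
  toFun := f
  inj' := hf
  map_rel_iff' {a b} := by
    change (attachHexagon _ H).Adj (f a) (f b) ↔ _
    rw [attachHexagon_adj_of_mem_edgeSupp (edgeSupp_hexEdges f ▸ ⟨a, rfl⟩), mk_mem_hexEdges_iff hf]
    exact and_iff_left_of_imp fun h => hf.ne h.ne

variable {H : SimpleGraph {v | v ∉ edgeSupp (hexEdges f)}}

lemma supp_attachHexagon (hf : Function.Injective f) :
    ((attachHexagon (hexEdges f) H).connectedComponentMk (f 0)).supp = Set.range f := by
  ext v
  constructor
  · intro hv
    refine (ConnectedComponent.exact hv).symm.mem_of_adj_closed (fun u w huw hu => ?_) ⟨0, rfl⟩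
    rw [← edgeSupp_hexEdges] at hu ⊢
    exact ⟨_, ((attachHexagon_adj_of_mem_edgeSupp hu).1 huw).1, Sym2.mem_mk_right _ _⟩
  · rintro ⟨j, rfl⟩
    exact ConnectedComponent.sound
      (reachable_of_adj_add_one (isHexCycle_of_embedding (attachHexagonEmbedding hf H)).2 j).symm

lemma isHexComp_attachHexagon (hf : Function.Injective f) :
    IsHexComp (attachHexagon (hexEdges f) H)
      ((attachHexagon (hexEdges f) H).connectedComponentMk (f 0)) :=
  isHexComp_of_range_eq (attachHexagonEmbedding hf H) (supp_attachHexagon hf).symm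

lemma compEdges_attachHexagon (hf : Function.Injective f) :
    compEdges (attachHexagon (hexEdges f) H)
      ((attachHexagon (hexEdges f) H).connectedComponentMk (f 0)) = hexEdges f :=
  compEdges_eq_hexEdges_s6 (attachHexagonEmbedding hf H) (supp_attachHexagon hf).symm

lemma compl_supp_attachHexagon (hf : Function.Injective f) :
    ((attachHexagon (hexEdges f) H).connectedComponentMk (f 0)).suppᶜ =
      {v | v ∉ edgeSupp (hexEdges f)} := by
  rw [supp_attachHexagon hf, ← edgeSupp_hexEdges, Set.compl_def]

lemma hexCount_attachHexagon [Finite V] (hf : Function.Injective f) :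
    hexCount (attachHexagon (hexEdges f) H) = hexCount H + 1 := by
  rw [hexCount_eq_hexCount_induce_compl_supp_add_one _ (isHexComp_attachHexagon hf),
    compl_supp_attachHexagon hf, induce_attachHexagon]

lemma isClarCover_attachHexagon (hf : IsHexCycle G f)
    (hH : IsClarCover (G.induce {v | v ∉ edgeSupp (hexEdges f)}) H) :
    IsClarCover G (attachHexagon (hexEdges f) H) := by
  refine ⟨attachHexagon_le ⟨f, hf, rfl⟩ hH.1,
    (forall_isHexComp_or_isEdgeComp_iff _).2 ⟨Or.inl (isHexComp_attachHexagon hf.1), ?_⟩⟩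
  rw [compl_supp_attachHexagon hf.1, induce_attachHexagon]
  exact hH.2

end AttachHexagonCycle

section RemoveHexagon

variable {G H : SimpleGraph V} {c : H.ConnectedComponent}

lemma IsHexComp.compl_edgeSupp_compEdges (hc : IsHexComp H c) :
    {v | v ∉ edgeSupp (compEdges H c)} = c.suppᶜ := by
  rw [hc.edgeSupp_compEdges, Set.compl_def]

lemma IsHexComp.attachHexagon_induce {E : Set (Sym2 V)} (hc : IsHexComp H c)
    (hE : compEdges H c = E) : attachHexagon E (H.induce {v | v ∉ edgeSupp E}) = H := by
  subst hE
  have hsupp := hc.edgeSupp_compEdges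
  have hin {u v : V} (hu : u ∈ c.supp) :
      (attachHexagon (compEdges H c) (H.induce {v | v ∉ edgeSupp (compEdges H c)})).Adj u v ↔
        H.Adj u v := by
    rw [attachHexagon_adj_of_mem_edgeSupp (hsupp ▸ hu)]
    refine ⟨fun h => H.mem_edgeSet.1 h.1.1, fun h => ⟨⟨h, fun w hw => ?_⟩, h.ne⟩⟩
    rcases Sym2.mem_iff.1 hw with rfl | rfl
    exacts [hu, c.mem_supp_of_adj_mem_supp hu h]
  ext u v
  by_cases hu : u ∈ c.supp
  · exact hin hu
  by_cases hv : v ∈ c.supp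
  · rw [adj_comm, H.adj_comm]
    exact hin hv
  have hu' : u ∉ edgeSupp (compEdges H c) := hsupp ▸ hu
  have hv' : v ∉ edgeSupp (compEdges H c) := hsupp ▸ hv
  exact iff_of_eq (congrArg (fun X => X.Adj ⟨u, hu'⟩ ⟨v, hv'⟩) induce_attachHexagon)

lemma IsHexComp.hexCount_eq_hexCount_induce_add_one [Finite V] {E : Set (Sym2 V)}
    (hc : IsHexComp H c) (hE : compEdges H c = E) :
    hexCount H = hexCount (H.induce {v | v ∉ edgeSupp E}) + 1 := by
  rw [← hE, hc.compl_edgeSupp_compEdges]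
  exact hexCount_eq_hexCount_induce_compl_supp_add_one c hc

lemma IsHexComp.isClarCover_induce {E : Set (Sym2 V)} (hc : IsHexComp H c)
    (hE : compEdges H c = E) (hH : IsClarCover G H) :
    IsClarCover (G.induce {v | v ∉ edgeSupp E}) (H.induce {v | v ∉ edgeSupp E}) := by
  rw [← hE, hc.compl_edgeSupp_compEdges]
  exact ⟨fun _ _ h => hH.1 h, ((forall_isHexComp_or_isEdgeComp_iff c).1 hH.2).2⟩

end RemoveHexagon

section Counting

abbrev MarkedClarCover (G : SimpleGraph V) (k : ℕ) : Type _ :=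
  Σ H : {H : SimpleGraph V // IsClarCover G H ∧ hexCount H = k},
    {c : H.1.ConnectedComponent // IsHexComp H.1 c}

variable {G : SimpleGraph V}

lemma MarkedClarCover.ext {k : ℕ} {p q : MarkedClarCover G k} (hpq : p.1.1 = q.1.1) {v : V}
    (hp : v ∈ p.2.1.supp) (hq : v ∈ q.2.1.supp) : p = q := by
  obtain ⟨⟨H, hH⟩, ⟨c, hc⟩⟩ := p
  obtain ⟨⟨H', hH'⟩, ⟨c', hc'⟩⟩ := q
  subst hpq
  obtain rfl := ConnectedComponent.eq_of_common_vertex hp hq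
  rfl

variable [Finite V]

lemma card_markedClarCover (G : SimpleGraph V) (k : ℕ) :
    Nat.card (MarkedClarCover G k) = clarCount G k * k := by
  have := Fintype.ofFinite {H : SimpleGraph V // IsClarCover G H ∧ hexCount H = k}
  rw [Nat.card_sigma, Finset.sum_congr rfl fun H _ => H.2.2, Finset.sum_const, smul_eq_mul,
    Finset.card_univ, clarCount, Nat.card_eq_fintype_card]

noncomputable def markedClarCoverFiberEquiv {f : Fin 6 → V} (hf : IsHexCycle G f) (k : ℕ) :
    {p : MarkedClarCover G (k + 1) // compEdges p.1.1 p.2.1 = hexEdges f} ≃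
      {H : SimpleGraph {v | v ∉ edgeSupp (hexEdges f)} //
        IsClarCover (G.induce {v | v ∉ edgeSupp (hexEdges f)}) H ∧ hexCount H = k} where
  toFun p := ⟨p.1.1.1.induce {v | v ∉ edgeSupp (hexEdges f)},
    p.1.2.2.isClarCover_induce p.2 p.1.1.2.1,
    by have := p.1.2.2.hexCount_eq_hexCount_induce_add_one p.2; rw [p.1.1.2.2] at this; omega⟩
  invFun H := ⟨⟨⟨attachHexagon (hexEdges f) H.1, isClarCover_attachHexagon hf H.2.1, by
      rw [hexCount_attachHexagon hf.1, H.2.2]⟩, ⟨_, isHexComp_attachHexagon hf.1⟩⟩,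
    compEdges_attachHexagon hf.1⟩
  left_inv := by
    rintro ⟨⟨⟨H, hH⟩, ⟨c, hc⟩⟩, hE⟩
    have hf₀ : f 0 ∈ c.supp := by
      rw [← hc.edgeSupp_compEdges, hE, edgeSupp_hexEdges]
      exact ⟨0, rfl⟩
    refine Subtype.ext (MarkedClarCover.ext ?_ ConnectedComponent.connectedComponentMk_mem hf₀)
    exact hc.attachHexagon_induce hE
  right_inv H := Subtype.ext induce_attachHexagon

lemma succ_mul_clarCount_succ (G : SimpleGraph V) (k : ℕ) :
    (k + 1) * clarCount G (k + 1) =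
      ∑ᶠ E ∈ {E | IsHexagon G E}, clarCount (G.induce {v | v ∉ edgeSupp E}) k := by
  have := Fintype.ofFinite {E | IsHexagon G E}
  let hexagonOf (p : MarkedClarCover G (k + 1)) : {E | IsHexagon G E} :=
    ⟨compEdges p.1.1 p.2.1, p.2.2.isHexagon_compEdges p.1.2.1.1⟩
  rw [← finsum_set_coe_eq_finsum_mem, finsum_eq_sum_of_fintype, mul_comm, ← card_markedClarCover,
    ← Nat.card_congr (Equiv.sigmaFiberEquiv hexagonOf), Nat.card_sigma]
  refine Finset.sum_congr rfl fun ⟨E, hE⟩ _ => ?_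
  obtain ⟨f, hf, rfl⟩ := hE
  exact Nat.card_congr ((Equiv.subtypeEquivRight fun p => Subtype.ext_iff).trans
    (markedClarCoverFiberEquiv hf k))

end Counting

section Derivative

variable [Finite V]

lemma hexCount_le_card (H : SimpleGraph V) : hexCount H ≤ Nat.card V :=
  (Nat.card_le_card_of_injective Subtype.val Subtype.val_injective).trans
    (Nat.card_le_card_of_surjective H.connectedComponentMk fun c => c.exists_rep)

lemma clarCount_eq_zero_of_card_lt (G : SimpleGraph V) {k : ℕ} (hk : Nat.card V < k) :
    clarCount G k = 0 :=
  Nat.card_eq_zero.2 (Or.inl ⟨fun ⟨H, _, hH⟩ => (hH ▸ hexCount_le_card H).not_gt hk⟩)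

lemma coeff_clarPoly (G : SimpleGraph V) (k : ℕ) : (clarPoly G).coeff k = clarCount G k := by
  classical
  simp only [clarPoly, finsetSum_coeff, coeff_C_mul_X_pow, Finset.sum_ite_eq, Finset.mem_range]
  split_ifs with hk
  · rfl
  · rw [clarCount_eq_zero_of_card_lt G (by omega), Nat.cast_zero]

lemma derivative_clarPoly (G : SimpleGraph V) :
    derivative (clarPoly G) =
      ∑ᶠ E ∈ {E | IsHexagon G E}, clarPoly (G.induce {v | v ∉ edgeSupp E}) := by
  have hfin := Set.toFinite {E | IsHexagon G E}
  ext k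
  rw [coeff_derivative, finsum_mem_eq_finite_toFinset_sum _ hfin, finsetSum_coeff]
  simp only [coeff_clarPoly]
  rw [← Nat.cast_sum, ← finsum_mem_eq_finite_toFinset_sum _ hfin, ← succ_mul_clarCount_succ]
  push_cast
  ring

end Derivative

section InducedHexagons

lemma edgeSupp_image_sym2Map (g : V → W) (A : Set (Sym2 V)) :
    edgeSupp (Sym2.map g '' A) = g '' edgeSupp A := by
  ext v
  constructor
  · rintro ⟨_, ⟨e, he, rfl⟩, hv⟩
    obtain ⟨a, ha, rfl⟩ := Sym2.mem_map.1 hv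
    exact ⟨a, ⟨e, he, ha⟩, rfl⟩
  · rintro ⟨a, ⟨e, he, ha⟩, rfl⟩
    exact ⟨Sym2.map g e, ⟨e, he, rfl⟩, Sym2.mem_map.2 ⟨a, ha, rfl⟩⟩

lemma image_sym2Map_hexEdges (g : V → W) (f : Fin 6 → V) :
    Sym2.map g '' hexEdges f = hexEdges (g ∘ f) := by
  ext e
  constructor
  · rintro ⟨_, ⟨i, rfl⟩, rfl⟩
    exact ⟨i, Sym2.map_mk g _ _⟩
  · rintro ⟨i, rfl⟩
    exact ⟨_, ⟨i, rfl⟩, Sym2.map_mk g _ _⟩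

variable {G : SimpleGraph V} {S : Set V}

lemma image_setOf_isHexagon_induce :
    (Sym2.map Subtype.val '' ·) '' {E' : Set (Sym2 S) | IsHexagon (G.induce S) E'} =
      {E | IsHexagon G E ∧ edgeSupp E ⊆ S} := by
  ext E
  constructor
  · rintro ⟨_, ⟨f, ⟨hinj, hadj⟩, rfl⟩, rfl⟩
    refine ⟨⟨Subtype.val ∘ f, ⟨Subtype.val_injective.comp hinj, hadj⟩,
      image_sym2Map_hexEdges _ _⟩, ?_⟩
    rw [edgeSupp_image_sym2Map]
    exact Subtype.coe_image_subset _ _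
  · rintro ⟨⟨f, ⟨hinj, hadj⟩, rfl⟩, hS⟩
    have hfS (i : Fin 6) : f i ∈ S := hS (edgeSupp_hexEdges f ▸ ⟨i, rfl⟩)
    let g (i : Fin 6) : S := ⟨f i, hfS i⟩
    exact ⟨hexEdges g, ⟨g, ⟨fun i j h => hinj (congrArg Subtype.val h), hadj⟩, rfl⟩,
      image_sym2Map_hexEdges _ g⟩

lemma image_val_compl_edgeSupp (E' : Set (Sym2 S)) :
    Subtype.val '' {x | x ∉ edgeSupp E'} =
      S ∩ {v | v ∉ edgeSupp (Sym2.map Subtype.val '' E')} := by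
  rw [edgeSupp_image_sym2Map]
  ext v
  constructor
  · rintro ⟨x, hx, rfl⟩
    exact ⟨x.2, fun ⟨y, hy, hyx⟩ => hx (Subtype.val_injective hyx ▸ hy)⟩
  · rintro ⟨hvS, hv⟩
    exact ⟨⟨v, hvS⟩, fun h => hv ⟨_, h, rfl⟩, rfl⟩

lemma derivative_clarPoly_induce [Finite V] (G : SimpleGraph V) (S : Set V) :
    derivative (clarPoly (G.induce S)) =
      ∑ᶠ E ∈ {E | IsHexagon G E ∧ edgeSupp E ⊆ S},
        clarPoly (G.induce (S ∩ {v | v ∉ edgeSupp E})) := by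
  rw [derivative_clarPoly, ← image_setOf_isHexagon_induce, finsum_mem_image]
  · refine finsum_mem_congr rfl fun E' _ => ?_
    rw [clarPoly_eq_of_iso (G.induceInduceIso S _), image_val_compl_edgeSupp]
  · exact fun _ _ _ _ h => Set.image_injective.2 (Sym2.map.injective Subtype.val_injective) h

end InducedHexagons

section Packings

def hexagonPackings (G : SimpleGraph V) (s : ℕ) : Set (Set (Set (Sym2 V))) :=
  {R | (∀ E ∈ R, IsHexagon G E) ∧
    R.Pairwise (fun E F => edgeSupp E ∩ edgeSupp F = ∅) ∧ R.ncard = s}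

def uncovered (R : Set (Set (Sym2 V))) : Set V := {v | ∀ E ∈ R, v ∉ edgeSupp E}

lemma uncovered_insert (E : Set (Sym2 V)) (R : Set (Set (Sym2 V))) :
    uncovered (insert E R) = uncovered R ∩ {v | v ∉ edgeSupp E} := by
  ext v
  simp only [uncovered, Set.mem_insert_iff, forall_eq_or_imp, Set.mem_inter_iff,
    Set.mem_ofPred_eq]
  exact and_comm

variable {G : SimpleGraph V} {s : ℕ} {E : Set (Sym2 V)} {R : Set (Set (Sym2 V))}

lemma IsHexagon.notMem_of_edgeSupp_subset_uncovered (hE : IsHexagon G E)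
    (hER : edgeSupp E ⊆ uncovered R) : E ∉ R := fun hmem =>
  let ⟨_, hv⟩ := hE.edgeSupp_nonempty
  hER hv E hmem hv

lemma insert_mem_hexagonPackings [Finite V] (hR : R ∈ hexagonPackings G s) (hE : IsHexagon G E)
    (hER : edgeSupp E ⊆ uncovered R) : insert E R ∈ hexagonPackings G (s + 1) := by
  obtain ⟨hhex, hdisj, hcard⟩ := hR
  refine ⟨Set.forall_mem_insert.2 ⟨hE, hhex⟩, hdisj.insert fun F hF _ => ?_, ?_⟩
  · have h : edgeSupp E ∩ edgeSupp F = ∅ :=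
      Set.eq_empty_of_forall_notMem fun v hv => hER hv.1 F hF hv.2
    exact ⟨h, Set.inter_comm _ _ ▸ h⟩
  · rw [Set.ncard_insert_of_notMem (hE.notMem_of_edgeSupp_subset_uncovered hER), hcard]

lemma diff_singleton_mem_hexagonPackings (hR : R ∈ hexagonPackings G (s + 1)) (hE : E ∈ R) :
    R \ {E} ∈ hexagonPackings G s := by
  obtain ⟨hhex, hdisj, hcard⟩ := hR
  refine ⟨fun F hF => hhex F hF.1, hdisj.mono Set.sdiff_subset, ?_⟩
  rw [Set.ncard_sdiff_singleton_of_mem hE, hcard, Nat.add_sub_cancel]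

lemma edgeSupp_subset_uncovered_diff_singleton (hR : R ∈ hexagonPackings G s) (hE : E ∈ R) :
    edgeSupp E ⊆ uncovered (R \ {E}) := fun v hv F ⟨hF, hFE⟩ hvF => by
  have h := hR.2.1 hE hF (Ne.symm hFE)
  exact (Set.eq_empty_iff_forall_notMem.1 h) v ⟨hv, hvF⟩

lemma sum_hexagonPackings_zero [Finite V] (G : SimpleGraph V) :
    ∑ᶠ R ∈ hexagonPackings G 0, clarPoly (G.induce (uncovered R)) = clarPoly G := by
  have h : hexagonPackings G 0 = {∅} := by
    ext R
    simp only [hexagonPackings, Set.mem_ofPred_eq, Set.mem_singleton_iff,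
      Set.ncard_eq_zero (Set.toFinite R)]
    constructor
    · exact fun h => h.2.2
    · rintro rfl
      simp
  have hu : uncovered (∅ : Set (Set (Sym2 V))) = Set.univ := by simp [uncovered]
  rw [h, finsum_mem_singleton, hu, clarPoly_eq_of_iso G.induceUnivIso]

lemma sum_hexagonPackings_sum_insert [Finite V] {M : Type*} [AddCommMonoid M]
    (F : Set (Set (Sym2 V)) → M) :
    ∑ᶠ R ∈ hexagonPackings G s, ∑ᶠ E ∈ {E | IsHexagon G E ∧ edgeSupp E ⊆ uncovered R},
      F (insert E R) = (s + 1) • ∑ᶠ R ∈ hexagonPackings G (s + 1), F R := by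
  classical
  have hcard (R) (hR : R ∈ (Set.toFinite (hexagonPackings G (s + 1))).toFinset) :
      (s + 1) • F R = ∑ _E ∈ (Set.toFinite R).toFinset, F R := by
    rw [Finset.sum_const, ← Set.ncard_eq_toFinset_card, ((Set.Finite.mem_toFinset _).1 hR).2.2]
  rw [finsum_mem_eq_finite_toFinset_sum _ (Set.toFinite _),
    finsum_mem_eq_finite_toFinset_sum _ (Set.toFinite _), Finset.smul_sum,
    Finset.sum_congr rfl fun R _ => finsum_mem_eq_finite_toFinset_sum _ (Set.toFinite _),
    Finset.sum_congr rfl hcard, Finset.sum_sigma', Finset.sum_sigma']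
  refine Finset.sum_nbij' (fun p => ⟨insert p.2 p.1, p.2⟩) (fun p => ⟨p.1 \ {p.2}, p.2⟩)
    ?_ ?_ ?_ ?_ fun _ _ => rfl
  · rintro ⟨R, E⟩ h
    simp only [Finset.mem_sigma, Set.Finite.mem_toFinset, Set.mem_ofPred_eq] at h ⊢
    exact ⟨insert_mem_hexagonPackings h.1 h.2.1 h.2.2, Set.mem_insert _ _⟩
  · rintro ⟨R, E⟩ h
    simp only [Finset.mem_sigma, Set.Finite.mem_toFinset, Set.mem_ofPred_eq] at h ⊢
    exact ⟨diff_singleton_mem_hexagonPackings h.1 h.2, h.1.1 E h.2,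
      edgeSupp_subset_uncovered_diff_singleton h.1 h.2⟩
  · rintro ⟨R, E⟩ h
    simp only [Finset.mem_sigma, Set.Finite.mem_toFinset, Set.mem_ofPred_eq] at h
    dsimp only
    rw [Set.insert_sdiff_self_of_notMem (h.2.1.notMem_of_edgeSupp_subset_uncovered h.2.2)]
  · rintro ⟨R, E⟩ h
    simp only [Finset.mem_sigma, Set.Finite.mem_toFinset] at h
    dsimp only
    rw [Set.insert_sdiff_singleton, Set.insert_eq_of_mem h.2]

lemma derivative_sum_hexagonPackings [Finite V] (G : SimpleGraph V) (s : ℕ) :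
    derivative (∑ᶠ R ∈ hexagonPackings G s, clarPoly (G.induce (uncovered R))) =
      (s + 1) • ∑ᶠ R ∈ hexagonPackings G (s + 1), clarPoly (G.induce (uncovered R)) := by
  rw [← sum_hexagonPackings_sum_insert]
  refine (derivative.toAddMonoidHom.map_finsum_mem _ (Set.toFinite _)).trans
    (finsum_mem_congr rfl fun R _ => ?_)
  rw [LinearMap.toAddMonoidHom_coe, derivative_clarPoly_induce]
  exact finsum_mem_congr rfl fun E _ => by rw [uncovered_insert]

end Packings

end

theorem clarPoly_iterated_derivative_general {V : Type*} [Fintype V] (G : SimpleGraph V)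
    (s : ℕ) :
    (⇑(Polynomial.derivative (R := ℤ)))^[s] (clarPoly G) =
      (s.factorial : ℤ) •
        ∑ᶠ R ∈ {R : Set (Set (Sym2 V)) | (∀ E ∈ R, IsHexagon G E) ∧
            R.Pairwise (fun E F => edgeSupp E ∩ edgeSupp F = ∅) ∧ R.ncard = s},
          clarPoly (G.induce {v : V | ∀ E ∈ R, v ∉ edgeSupp E}) := by
  change _ = _ • ∑ᶠ R ∈ hexagonPackings G s, clarPoly (G.induce (uncovered R))
  induction s with
  | zero => rw [sum_hexagonPackings_zero, Nat.factorial_zero, Nat.cast_one, one_smul,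
      Function.iterate_zero_apply]
  | succ s ih =>
    rw [Function.iterate_succ_apply', ih, derivative_smul, derivative_sum_hexagonPackings,
      ← natCast_zsmul, smul_smul, Nat.factorial_succ, Nat.cast_mul, mul_comm]

/-- For a finite simple graph `G` and a positive integer `s`,
the `s`-th derivative of the Clar covering polynomial of `G` satisfies
`ζ⁽ˢ⁾(G,x) = s! · Σ_R ζ(G − V(R), x)`, the sum running over all `s`-element
sets `R` of pairwise vertex-disjoint 6-cycles of `G` (given by their edge
sets). -/
theorem clarPoly_iterated_derivative {V : Type*} [Fintype V] (G : SimpleGraph V)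
    (s : ℕ) (hs : 0 < s) :
    (⇑(Polynomial.derivative (R := ℤ)))^[s] (clarPoly G) =
      (s.factorial : ℤ) •
        ∑ᶠ R ∈ {R : Set (Set (Sym2 V)) | (∀ E ∈ R, IsHexagon G E) ∧
            R.Pairwise (fun E F => edgeSupp E ∩ edgeSupp F = ∅) ∧ R.ncard = s},
          clarPoly (G.induce {v : V | ∀ E ∈ R, v ∉ edgeSupp E}) :=
  clarPoly_iterated_derivative_general G s
end

section
/- Let G be a finite median graph. Then Σ_{i≥0} (−1)^i α_i(G) = 1; equivalently, the cube polynomial of G evaluated at −1 equals 1: C(G,−1) = 1. -/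
/-!
Fix a base vertex `v₀` and call the neighbours of `u` that are one step closer to `v₀` its
lower neighbours. In a median graph the distance to `v₀` is an affine function on every induced
cube, so each cube has a unique vertex `u` farthest from `v₀`, and its edges at `u` go to lower
neighbours of `u`. Conversely, every set `T` of lower neighbours of `u` spans exactly one such
cube: it is built one direction `w ∈ T` at a time, the new copy of the cube being obtained by
taking medians with `w` and `v₀`, and it is unique because the quadrangle condition determines
each vertex from two of its upper neighbours. Hence `α_i(G) = Σ_u C(d↓(u), i)`, where `d↓(u)` is
the number of lower neighbours, and `Σ_i (-1)^i α_i(G) = #{u | d↓(u) = 0} = 1`, since `v₀` is the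
only vertex without lower neighbours.
-/

open SimpleGraph Polynomial

/-- `α_i(G)`: the number of vertex subsets of `G` whose induced subgraph is
isomorphic to the `i`-cube `Q_i`. -/
noncomputable def cubeCount {V : Type*} (G : SimpleGraph V) (i : ℕ) : ℕ :=
  Nat.card {S : Set V // Nonempty (G.induce S ≃g cubeGraph i)}

/-- The cube polynomial `C(G,x) = Σ_i α_i(G)·xⁱ` of `G`.  (The `i`-cube has
`2ⁱ ≥ i + 1` vertices, so `α_i(G) = 0` for `i > |V|` and the range of summation
captures all nonzero terms.) -/
noncomputable def cubePoly {V : Type*} (G : SimpleGraph V) : Polynomial ℤ :=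
  ∑ i ∈ Finset.range (Nat.card V + 1), Polynomial.C (cubeCount G i : ℤ) * Polynomial.X ^ i

/-- A median graph: a connected graph in which, for every triple of vertices
`u`, `v`, `w`, there is a unique vertex `m` lying simultaneously on a shortest
`u,v`-path, a shortest `u,w`-path and a shortest `v,w`-path. -/
def IsMedianGraph {V : Type*} (G : SimpleGraph V) : Prop :=
  G.Connected ∧ ∀ u v w : V, ∃! m : V,
    G.dist u m + G.dist m v = G.dist u v ∧
    G.dist u m + G.dist m w = G.dist u w ∧
    G.dist v m + G.dist m w = G.dist v w

open Finset
open scoped symmDiff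

section

variable {V : Type*} {G : SimpleGraph V}

namespace Finset

variable {ι : Type*} [DecidableEq ι]

@[simp] lemma empty_symmDiff (A : Finset ι) : ∅ ∆ A = A := bot_symmDiff A

@[simp] lemma symmDiff_empty (A : Finset ι) : A ∆ ∅ = A := symmDiff_bot A

lemma insert_symmDiff_self {j : ι} {A : Finset ι} (hj : j ∉ A) : insert j A ∆ A = {j} := by
  ext x
  by_cases hx : x = j
  · subst hx; simp [mem_symmDiff, hj]
  · simp [mem_symmDiff, hx]

lemma card_symmDiff_eq_card_erase_symmDiff (A B : Finset ι) (w : ι) :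
    #(A ∆ B) = #(A.erase w ∆ B.erase w) + if (w ∈ A ↔ w ∈ B) then 0 else 1 := by
  have h : (A ∆ B).erase w = A.erase w ∆ B.erase w := by
    ext x; simp only [mem_erase, mem_symmDiff]; tauto
  split_ifs with hw
  · rw [← h, erase_eq_of_notMem (by simp only [mem_symmDiff]; tauto), add_zero]
  · rw [← h, card_erase_add_one (by simp only [mem_symmDiff]; tauto)]

lemma exists_eq_insert_of_card_symmDiff_eq_one {A B : Finset ι} (h : #(A ∆ B) = 1) :
    (∃ j ∉ A, B = insert j A) ∨ (∃ j ∉ B, A = insert j B) := by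
  obtain ⟨j, hj⟩ := card_eq_one.mp h
  have key : ∀ {A B : Finset ι}, A ∆ B = {j} → j ∉ A → B = insert j A := fun {A B} hAB hjA => by
    rw [← symmDiff_symmDiff_cancel_left A B, hAB, ← insert_symmDiff_self hjA, symmDiff_comm A,
      symmDiff_symmDiff_cancel_right]
  by_cases hjA : j ∈ A
  · have hjB : j ∉ B := fun hjB => by
      have := hj ▸ mem_singleton_self j
      simp [mem_symmDiff, hjA, hjB] at this
    exact Or.inr ⟨j, hjB, key (by rw [symmDiff_comm, hj]) hjB⟩
  · exact Or.inl ⟨j, hjA, key hj hjA⟩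

end Finset

lemma Int.alternating_sum_range_choose_of_le {m N : ℕ} (h : m ≤ N) :
    ∑ i ∈ Finset.range (N + 1), (-1 : ℤ) ^ i * (m.choose i : ℤ) = if m = 0 then 1 else 0 := by
  rw [← Int.alternating_sum_range_choose]
  refine (sum_subset (range_subset_range.mpr (by omega)) fun i _ hi => ?_).symm
  rw [Nat.choose_eq_zero_of_lt (by simpa using hi), Nat.cast_zero, mul_zero]

namespace SimpleGraph

lemma dist_eq_two_of_adj_of_adj {a b c : V} (hab : a ≠ b) (hnadj : ¬ G.Adj a b)
    (hca : G.Adj c a) (hcb : G.Adj c b) : G.dist a b = 2 := by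
  have h : G.edist a b = 2 := edist_eq_two_iff.mpr ⟨hab, hnadj, c, hca.symm, hcb.symm⟩
  simp [dist, h]

lemma Connected.exists_adj_dist_add_one_eq (hconn : G.Connected) {u v : V} (huv : u ≠ v) :
    ∃ t, G.Adj u t ∧ G.dist t v + 1 = G.dist u v := by
  obtain ⟨p, hp⟩ := hconn.exists_walk_length_eq_dist u v
  cases p with
  | nil => exact absurd rfl huv
  | @cons _ t _ h q =>
    refine ⟨t, h, le_antisymm ?_ ?_⟩
    · simpa [← hp] using dist_le q
    · have := hconn.dist_triangle (u := u) (v := t) (w := v)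
      rw [dist_eq_one_iff_adj.mpr h] at this
      omega

end SimpleGraph

namespace IsMedianGraph

noncomputable def median (hG : IsMedianGraph G) (u v w : V) : V := (hG.2 u v w).choose

lemma median_spec (hG : IsMedianGraph G) (u v w : V) :
    G.dist u (hG.median u v w) + G.dist (hG.median u v w) v = G.dist u v ∧
      G.dist u (hG.median u v w) + G.dist (hG.median u v w) w = G.dist u w ∧
      G.dist v (hG.median u v w) + G.dist (hG.median u v w) w = G.dist v w :=
  (hG.2 u v w).choose_spec.1

lemma eq_median (hG : IsMedianGraph G) {u v w m : V}
    (h₁ : G.dist u m + G.dist m v = G.dist u v) (h₂ : G.dist u m + G.dist m w = G.dist u w)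
    (h₃ : G.dist v m + G.dist m w = G.dist v w) : m = hG.median u v w :=
  (hG.2 u v w).choose_spec.2 m ⟨h₁, h₂, h₃⟩

lemma dist_ne_of_adj (hG : IsMedianGraph G) {x y : V} (h : G.Adj x y) (z : V) :
    G.dist z x ≠ G.dist z y := by
  obtain ⟨h₁, h₂, h₃⟩ := hG.median_spec x y z
  have hxy : G.dist x y = 1 := dist_eq_one_iff_adj.mpr h
  have := G.dist_comm (u := z) (v := x)
  have := G.dist_comm (u := z) (v := y)
  have := G.dist_comm (u := x) (v := y)
  rcases Nat.le_one_iff_eq_zero_or_eq_one.mp (by omega : G.dist x (hG.median x y z) ≤ 1)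
    with h₀ | h₀
  · rw [← hG.1.dist_eq_zero_iff.mp h₀] at h₃
    omega
  · rw [hG.1.dist_eq_zero_iff.mp (by omega : G.dist (hG.median x y z) y = 0)] at h₂
    omega

lemma dist_eq_add_one_or_of_adj (hG : IsMedianGraph G) {x y : V} (h : G.Adj x y) (z : V) :
    G.dist z y = G.dist z x + 1 ∨ G.dist z x = G.dist z y + 1 := by
  have := hG.dist_ne_of_adj h z
  rcases h.diff_dist_adj (u := z) with h' | h' | h' <;> omega

/-- The quadrangle condition, realised by the median of `a`, `b` and `z`. -/
lemma median_adj_of_dist_eq (hG : IsMedianGraph G) {z a b c : V} (hab : a ≠ b)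
    (hlev : G.dist z a = G.dist z b) (hca : G.Adj c a) (hcb : G.Adj c b) :
    G.Adj (hG.median a b z) a ∧ G.Adj (hG.median a b z) b ∧
      G.dist z (hG.median a b z) + 1 = G.dist z a := by
  have hab₂ : G.dist a b = 2 :=
    dist_eq_two_of_adj_of_adj hab (fun h => hG.dist_ne_of_adj h z hlev) hca hcb
  obtain ⟨h₁, h₂, h₃⟩ := hG.median_spec a b z
  set m := hG.median a b z
  have := G.dist_comm (u := z) (v := a)
  have := G.dist_comm (u := z) (v := b)
  have := G.dist_comm (u := z) (v := m)
  have := G.dist_comm (u := a) (v := m)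
  have := G.dist_comm (u := a) (v := b)
  have hma : G.dist a m ≠ 0 := fun h₀ => by
    rw [← hG.1.dist_eq_zero_iff.mp h₀] at h₃
    omega
  have hmb : G.dist m b ≠ 0 := fun h₀ => by
    rw [hG.1.dist_eq_zero_iff.mp h₀] at h₂
    omega
  refine ⟨dist_eq_one_iff_adj.mp (by omega), dist_eq_one_iff_adj.mp (by omega), by omega⟩

/-- Both lower common neighbours are the median of `a`, `b` and `z`. -/
lemma eq_of_adj_of_dist_add_one (hG : IsMedianGraph G) {z a b c c' : V} (hab : a ≠ b)
    (hlev : G.dist z a = G.dist z b)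
    (hca : G.Adj c a) (hcb : G.Adj c b) (hc'a : G.Adj c' a) (hc'b : G.Adj c' b)
    (hc : G.dist z c + 1 = G.dist z a) (hc' : G.dist z c' + 1 = G.dist z a) : c = c' := by
  have hab₂ : G.dist a b = 2 :=
    dist_eq_two_of_adj_of_adj hab (fun h => hG.dist_ne_of_adj h z hlev) hca hcb
  have key : ∀ x, G.Adj x a → G.Adj x b → G.dist z x + 1 = G.dist z a →
      x = hG.median a b z := by
    intro x hxa hxb hx
    have := dist_eq_one_iff_adj.mpr hxa
    have := dist_eq_one_iff_adj.mpr hxb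
    have := G.dist_comm (u := z) (v := a)
    have := G.dist_comm (u := z) (v := b)
    have := G.dist_comm (u := z) (v := x)
    have := G.dist_comm (u := a) (v := x)
    have := G.dist_comm (u := b) (v := x)
    exact hG.eq_median (by omega) (by omega) (by omega)
  rw [key c hca hcb hc, key c' hc'a hc'b hc']

/-- `K₂,₃`-freeness: both `x` and `y` are the median of `a`, `b` and `c`. -/
lemma eq_of_adj_of_adj_of_adj (hG : IsMedianGraph G) {a b c x y : V}
    (hab : G.dist a b = 2) (hac : G.dist a c = 2) (hbc : G.dist b c = 2)
    (hxa : G.Adj x a) (hxb : G.Adj x b) (hxc : G.Adj x c)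
    (hya : G.Adj y a) (hyb : G.Adj y b) (hyc : G.Adj y c) : x = y := by
  have key : ∀ m, G.Adj m a → G.Adj m b → G.Adj m c → m = hG.median a b c := by
    intro m hma hmb hmc
    have := dist_eq_one_iff_adj.mpr hma.symm
    have := dist_eq_one_iff_adj.mpr hmb
    have := dist_eq_one_iff_adj.mpr hmb.symm
    have := dist_eq_one_iff_adj.mpr hmc
    exact hG.eq_median (by omega) (by omega) (by omega)
  rw [key x hxa hxb hxc, key y hya hyb hyc]

/-- A second upper common neighbour would form a `K₂,₃` with the quadrangle vertex below. -/
lemma eq_of_adj_of_dist_eq_add_one (hG : IsMedianGraph G) {z a b c c' : V} (hab : a ≠ b)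
    (hlev : G.dist z a = G.dist z b)
    (hca : G.Adj c a) (hcb : G.Adj c b) (hc'a : G.Adj c' a) (hc'b : G.Adj c' b)
    (hc : G.dist z c = G.dist z a + 1) (hc' : G.dist z c' = G.dist z a + 1) : c = c' := by
  by_contra hne
  obtain ⟨hma, hmb, hm⟩ := hG.median_adj_of_dist_eq hab hlev hca hcb
  set m := hG.median a b z
  have hcc' : G.dist c c' = 2 := dist_eq_two_of_adj_of_adj hne
    (fun h => hG.dist_ne_of_adj h z (by omega)) hca.symm hc'a.symm
  have hcm : G.dist c m = 2 := dist_eq_two_of_adj_of_adj (fun h => by subst h; omega)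
    (fun h => by rcases hG.dist_eq_add_one_or_of_adj h z with h' | h' <;> omega)
    hca.symm hma.symm
  have hc'm : G.dist c' m = 2 := dist_eq_two_of_adj_of_adj (fun h => by subst h; omega)
    (fun h => by rcases hG.dist_eq_add_one_or_of_adj h z with h' | h' <;> omega)
    hc'a.symm hma.symm
  exact hab (hG.eq_of_adj_of_adj_of_adj hcc' hcm hc'm hca.symm hc'a.symm hma.symm
    hcb.symm hc'b.symm hmb.symm)

/-- Otherwise two opposite corners of the square would have two distinct common neighbours
on the same side of them. -/
lemma dist_add_dist_eq_of_square (hG : IsMedianGraph G) {a b c d : V}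
    (hab : G.Adj a b) (hac : G.Adj a c) (hbd : G.Adj b d) (hcd : G.Adj c d)
    (had : a ≠ d) (hbc : b ≠ c) (z : V) :
    G.dist z b + G.dist z c = G.dist z a + G.dist z d := by
  rcases hG.dist_eq_add_one_or_of_adj hab z with h₁ | h₁ <;>
    rcases hG.dist_eq_add_one_or_of_adj hac z with h₂ | h₂ <;>
    rcases hG.dist_eq_add_one_or_of_adj hbd z with h₃ | h₃ <;>
    rcases hG.dist_eq_add_one_or_of_adj hcd z with h₄ | h₄ <;>
    try omega
  · exact absurd (hG.eq_of_adj_of_dist_add_one (z := z) hbc (by omega) hab hac hbd.symm hcd.symm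
      (by omega) (by omega)) had
  · exact absurd (hG.eq_of_adj_of_dist_eq_add_one (z := z) hbc (by omega) hab hac hbd.symm hcd.symm
      (by omega) (by omega)) had

/-- The median of `a`, `w` and `v₀` is the quadrangle vertex below `a` and `b`. -/
lemma adj_median_of_dist_eq_add_two (hG : IsMedianGraph G) {v₀ w a b c : V}
    (hca : G.Adj c a) (hcb : G.Adj c b) (ha : G.dist v₀ a + 1 = G.dist v₀ c)
    (hb : G.dist v₀ b + 1 = G.dist v₀ c) {n : ℕ} (hwa : G.dist w a = n + 2)
    (hwb : G.dist w b = n) (hw : G.dist w v₀ + 2 = G.dist w a + G.dist a v₀) :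
    G.Adj a (hG.median a w v₀) ∧ G.Adj b (hG.median a w v₀) ∧
      G.dist v₀ (hG.median a w v₀) + 1 = G.dist v₀ a ∧ G.dist w (hG.median a w v₀) = n + 1 := by
  have hab : a ≠ b := fun h => by subst h; omega
  obtain ⟨hma, hmb, hm⟩ := hG.median_adj_of_dist_eq (z := v₀) hab (by omega) hca hcb
  set m := hG.median a b v₀
  have hma₁ := dist_eq_one_iff_adj.mpr hma
  have hmb₁ := dist_eq_one_iff_adj.mpr hmb
  have := hG.1.dist_triangle (u := w) (v := m) (w := a)
  have := hG.1.dist_triangle (u := w) (v := b) (w := m)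
  have := G.dist_comm (u := a) (v := m)
  have := G.dist_comm (u := b) (v := m)
  have := G.dist_comm (u := a) (v := w)
  have := G.dist_comm (u := a) (v := v₀)
  have := G.dist_comm (u := m) (v := v₀)
  have := G.dist_comm (u := m) (v := w)
  have hmw : G.dist w m = n + 1 := by omega
  have hm' : m = hG.median a w v₀ := hG.eq_median (by omega) (by omega) (by omega)
  rw [← hm']
  exact ⟨hma.symm, hmb.symm, hm, hmw⟩

end IsMedianGraph

namespace SimpleGraph

variable {ι κ : Type*} [DecidableEq ι] [DecidableEq κ]

/-- `F` is an isomorphism from the cube on the coordinate set `T`, whose vertices are the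
subsets of `T`, onto an induced subgraph of `G`. -/
structure IsCubeOn (G : SimpleGraph V) (T : Finset ι) (F : Finset ι → V) : Prop where
  injOn : ∀ ⦃A⦄, A ⊆ T → ∀ ⦃B⦄, B ⊆ T → F A = F B → A = B
  adj_iff : ∀ ⦃A⦄, A ⊆ T → ∀ ⦃B⦄, B ⊆ T → (G.Adj (F A) (F B) ↔ #(A ∆ B) = 1)

namespace IsCubeOn

variable {T : Finset ι} {F : Finset ι → V}

lemma adj_insert (hF : G.IsCubeOn T F) {A : Finset ι} (hA : A ⊆ T) {j : ι} (hjT : j ∈ T)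
    (hjA : j ∉ A) : G.Adj (F (insert j A)) (F A) :=
  (hF.adj_iff (insert_subset hjT hA) hA).mpr (by rw [insert_symmDiff_self hjA, card_singleton])

lemma comp_symmDiff (hF : G.IsCubeOn T F) {R : Finset ι} (hR : R ⊆ T) :
    G.IsCubeOn T (fun A => F (A ∆ R)) where
  injOn A hA B hB h := symmDiff_left_injective R <|
    hF.injOn (symmDiff_subset_union.trans (union_subset hA hR))
      (symmDiff_subset_union.trans (union_subset hB hR)) h
  adj_iff A hA B hB := by
    rw [hF.adj_iff (symmDiff_subset_union.trans (union_subset hA hR))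
      (symmDiff_subset_union.trans (union_subset hB hR)), symmDiff_symmDiff_symmDiff_comm,
      symmDiff_self, symmDiff_bot]

lemma comp_map (hF : G.IsCubeOn T F) {S : Finset κ} (φ : κ ↪ ι) (hS : S.map φ = T) :
    G.IsCubeOn S (fun A => F (A.map φ)) where
  injOn A hA B hB h := Finset.map_injective φ <|
    hF.injOn (hS ▸ map_subset_map.mpr hA) (hS ▸ map_subset_map.mpr hB) h
  adj_iff A hA B hB := by
    rw [hF.adj_iff (hS ▸ map_subset_map.mpr hA) (hS ▸ map_subset_map.mpr hB), map_eq_image,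
      map_eq_image, ← image_symmDiff _ _ φ.injective, card_image_of_injective _ φ.injective]

/-- Gluing two parallel copies of a cube on `T` gives a cube on `insert w T`. -/
lemma prism {g : Finset ι → V} (hF : G.IsCubeOn T F) (hg : G.IsCubeOn T g) {w : ι}
    (hadj : ∀ A ⊆ T, G.Adj (F A) (g A)) (hne : ∀ A ⊆ T, ∀ B ⊆ T, g A ≠ F B)
    (hadj' : ∀ A ⊆ T, ∀ B ⊆ T, G.Adj (g A) (F B) → A = B) :
    G.IsCubeOn (insert w T) (fun A => if w ∈ A then g (A.erase w) else F A) := by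
  have hsub : ∀ {A}, A ⊆ insert w T → A.erase w ⊆ T := fun hA =>
    (erase_subset_erase w hA).trans (erase_insert_subset w T)
  have hval : ∀ A : Finset ι, (if w ∈ A then g (A.erase w) else F A) =
      if w ∈ A then g (A.erase w) else F (A.erase w) := fun A => by
    split_ifs with h
    · rfl
    · rw [erase_eq_of_notMem h]
  have hrec : ∀ {A B : Finset ι}, (w ∈ A ↔ w ∈ B) → A.erase w = B.erase w → A = B :=
    fun {A B} hw h => by
      by_cases hA : w ∈ A
      · rw [← insert_erase hA, ← insert_erase (hw.mp hA), h]
      · rw [← erase_eq_of_notMem hA, ← erase_eq_of_notMem (mt hw.mpr hA), h]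
  constructor
  · intro A hA B hB h
    simp only [hval] at h
    apply hrec _ _
    · split_ifs at h with hwA hwB hwB
      · tauto
      · exact absurd h (hne _ (hsub hA) _ (hsub hB))
      · exact absurd h.symm (hne _ (hsub hB) _ (hsub hA))
      · tauto
    · split_ifs at h with hwA hwB hwB
      · exact hg.injOn (hsub hA) (hsub hB) h
      · exact absurd h (hne _ (hsub hA) _ (hsub hB))
      · exact absurd h.symm (hne _ (hsub hB) _ (hsub hA))
      · exact hF.injOn (hsub hA) (hsub hB) h
  · intro A hA B hB
    simp only [hval]
    rw [card_symmDiff_eq_card_erase_symmDiff A B w]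
    have hA' := hsub hA
    have hB' := hsub hB
    split_ifs with hwA hwB hwB hwB hwB <;> try tauto
    · rw [hg.adj_iff hA' hB', add_zero]
    · rw [Nat.add_eq_right, card_eq_zero, symmDiff_eq_empty]
      exact ⟨hadj' _ hA' _ hB', fun h => h ▸ (hadj _ hB').symm⟩
    · rw [Nat.add_eq_right, card_eq_zero, symmDiff_eq_empty]
      exact ⟨fun h => (hadj' _ hB' _ hA' h.symm).symm, fun h => h ▸ hadj _ hA'⟩
    · rw [hF.adj_iff hA' hB', add_zero]

lemma adj_erase (hF : G.IsCubeOn T F) {A : Finset ι} (hA : A ⊆ T) {j : ι} (hj : j ∈ A) :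
    G.Adj (F A) (F (A.erase j)) := by
  simpa only [insert_erase hj] using
    hF.adj_insert ((erase_subset j A).trans hA) (hA hj) (notMem_erase j A)

lemma adj_singleton (hF : G.IsCubeOn T F) {j : ι} (hj : j ∈ T) : G.Adj (F ∅) (F {j}) := by
  simpa using (hF.adj_insert (empty_subset T) hj (notMem_empty j)).symm

/-- In a median graph the distance to a fixed vertex is an affine function on every cube. -/
lemma dist_insert_add_dist_empty (hG : IsMedianGraph G) (hF : G.IsCubeOn T F) (z : V)
    {A : Finset ι} (hA : A ⊆ T) {j : ι} (hjT : j ∈ T) (hjA : j ∉ A) :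
    G.dist z (F (insert j A)) + G.dist z (F ∅) = G.dist z (F A) + G.dist z (F {j}) := by
  induction A using Finset.induction_on with
  | empty => simp [add_comm]
  | insert k A hkA ih =>
    have hkT : k ∈ T := hA (mem_insert_self k A)
    have hA' : A ⊆ T := (subset_insert k A).trans hA
    have hjk : j ≠ k := fun h => hjA (h ▸ mem_insert_self k A)
    have hjA' : j ∉ A := fun h => hjA (mem_insert_of_mem h)
    have hkjA : k ∉ insert j A := by simp [Ne.symm hjk, hkA]
    have hsquare := hG.dist_add_dist_eq_of_square (hF.adj_insert hA' hkT hkA).symm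
      (hF.adj_insert hA' hjT hjA').symm (hF.adj_insert (insert_subset hkT hA') hjT hjA).symm
      (by simpa only [insert_comm] using
        (hF.adj_insert (insert_subset hjT hA') hkT hkjA).symm)
      (fun h => hjA' (hF.injOn hA' (insert_subset hjT (insert_subset hkT hA')) h ▸
        mem_insert_self j _))
      (fun h => hjA (hF.injOn (insert_subset hkT hA') (insert_subset hjT hA') h ▸
        mem_insert_self j _)) z
    have := ih hA' hjA'
    omega

lemma dist_eq_add_card (hG : IsMedianGraph G) (hF : G.IsCubeOn T F) {z : V}
    (hz : ∀ j ∈ T, G.dist z (F {j}) = G.dist z (F ∅) + 1) {A : Finset ι} (hA : A ⊆ T) :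
    G.dist z (F A) = G.dist z (F ∅) + #A := by
  induction A using Finset.induction_on with
  | empty => simp
  | insert j A hjA ih =>
    have hjT : j ∈ T := hA (mem_insert_self j A)
    have hA' : A ⊆ T := (subset_insert j A).trans hA
    have := hF.dist_insert_add_dist_empty hG z hA' hjT hjA
    have := hz j hjT
    have := ih hA'
    rw [card_insert_of_notMem hjA]
    omega

lemma dist_add_card (hG : IsMedianGraph G) (hF : G.IsCubeOn T F) {z : V}
    (hz : ∀ j ∈ T, G.dist z (F {j}) + 1 = G.dist z (F ∅)) {A : Finset ι} (hA : A ⊆ T) :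
    G.dist z (F A) + #A = G.dist z (F ∅) := by
  induction A using Finset.induction_on with
  | empty => simp
  | insert j A hjA ih =>
    have hjT : j ∈ T := hA (mem_insert_self j A)
    have hA' : A ⊆ T := (subset_insert j A).trans hA
    have := hF.dist_insert_add_dist_empty hG z hA' hjT hjA
    have := hz j hjT
    have := ih hA'
    rw [card_insert_of_notMem hjA]
    omega

lemma dist_eq_one_add_card_symmDiff (hG : IsMedianGraph G) (hF : G.IsCubeOn T F) {z : V}
    (hz : ∀ A ⊆ T, F A ≠ z) {R : Finset ι} (hR : R ⊆ T) (hzR : G.Adj z (F R))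
    {A : Finset ι} (hA : A ⊆ T) : G.dist z (F A) = 1 + #(A ∆ R) := by
  have hF' := hF.comp_symmDiff hR
  have hAR : A ∆ R ⊆ T := symmDiff_subset_union.trans (union_subset hA hR)
  have hzR' : G.dist z (F R) = 1 := dist_eq_one_iff_adj.mpr hzR
  have hup : ∀ j ∈ T, G.dist z (F ({j} ∆ R)) = G.dist z (F (∅ ∆ R)) + 1 := by
    intro j hj
    have hjR : {j} ∆ R ⊆ T := symmDiff_subset_union.trans (union_subset (by simpa) hR)
    have hne : G.dist z (F ({j} ∆ R)) ≠ 0 := fun h => hz _ hjR (hG.1.dist_eq_zero_iff.mp h).symm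
    rw [empty_symmDiff]
    rcases hG.dist_eq_add_one_or_of_adj (hF'.adj_singleton hj) z with h | h <;>
      simp only [empty_symmDiff] at h <;> omega
  have := hF'.dist_eq_add_card hG hup hAR
  simp only [symmDiff_symmDiff_cancel_right, empty_symmDiff] at this
  omega

end IsCubeOn

variable {v₀ u : V}

/-- A cube on `T` with top vertex `u`, all of whose edges at `u` lead one step towards `v₀`. -/
structure IsLowerCube (G : SimpleGraph V) (v₀ u : V) (T : Finset ι) (F : Finset ι → V) : Prop
    extends G.IsCubeOn T F where
  map_empty : F ∅ = u
  dist_map_singleton : ∀ j ∈ T, G.dist v₀ (F {j}) + 1 = G.dist v₀ u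

lemma IsCubeOn.exists_isLowerCube (hG : IsMedianGraph G) {T : Finset ι} {F : Finset ι → V}
    (hF : G.IsCubeOn T F) (v₀ : V) : ∃ R ⊆ T, G.IsLowerCube v₀ (F R) T (fun A => F (A ∆ R)) := by
  obtain ⟨R, hR, hmax⟩ :=
    T.powerset.exists_max_image (fun A => G.dist v₀ (F A)) ⟨∅, empty_mem_powerset T⟩
  rw [mem_powerset] at hR
  refine ⟨R, hR, hF.comp_symmDiff hR, by simp, fun j hj => ?_⟩
  have hjR : {j} ∆ R ⊆ T := symmDiff_subset_union.trans (union_subset (by simpa) hR)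
  have := hmax _ (mem_powerset.mpr hjR)
  have := hG.dist_eq_add_one_or_of_adj ((hF.comp_symmDiff hR).adj_singleton hj) v₀
  simp only [empty_symmDiff] at this
  omega

namespace IsLowerCube

variable {T : Finset ι} {F : Finset ι → V}

lemma dist_add_card (hG : IsMedianGraph G) (hF : G.IsLowerCube v₀ u T F) {A : Finset ι}
    (hA : A ⊆ T) : G.dist v₀ (F A) + #A = G.dist v₀ u := by
  have := hF.toIsCubeOn.dist_add_card hG (z := v₀)
    (fun j hj => hF.map_empty ▸ hF.dist_map_singleton j hj) hA
  rwa [hF.map_empty] at this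

/-- A lower cube is determined by its top vertex and its edges there: a vertex two or more
levels below the top is the lower common neighbour of two of its upper neighbours. -/
lemma eq_map_map (hG : IsMedianGraph G) {T₁ : Finset κ} {F₁ : Finset κ → V}
    (h₁ : G.IsLowerCube v₀ u T₁ F₁) (h₂ : G.IsLowerCube v₀ u T F) (σ : κ ↪ ι)
    (hσ : T₁.map σ ⊆ T) (hσF : ∀ j ∈ T₁, F₁ {j} = F {σ j}) {A : Finset κ} (hA : A ⊆ T₁) :
    F₁ A = F (A.map σ) := by
  induction A using Finset.strongInduction with
  | H A ih =>
  rcases Nat.lt_or_ge 1 #A with hcard | hcard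
  · obtain ⟨j, hj, k, hk, hjk⟩ := one_lt_card.mp hcard
    have hAσ : A.map σ ⊆ T := (map_subset_map.mpr hA).trans hσ
    have hsub : ∀ i, A.erase i ⊆ T₁ := fun i => (erase_subset i A).trans hA
    have ih' : ∀ i ∈ A, F₁ (A.erase i) = F ((A.map σ).erase (σ i)) := fun i hi => by
      rw [ih _ (erase_ssubset hi) (hsub i), map_erase]
    have hlev : ∀ i ∈ A, G.dist v₀ (F₁ (A.erase i)) + #A = G.dist v₀ u + 1 := fun i hi => by
      have := h₁.dist_add_card hG (hsub i)
      rw [card_erase_of_mem hi] at this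
      omega
    have hA₁ := h₁.dist_add_card hG hA
    have hA₂ := h₂.dist_add_card hG hAσ
    rw [card_map] at hA₂
    have := hlev j hj
    have := hlev k hk
    refine hG.eq_of_adj_of_dist_add_one (z := v₀) (a := F₁ (A.erase j)) (b := F₁ (A.erase k))
      (fun h => ?_) (by omega) (h₁.adj_erase hA hj) (h₁.adj_erase hA hk) ?_ ?_
      (by omega) (by omega)
    · have := h₁.injOn (hsub j) (hsub k) h
      exact notMem_erase k A (this ▸ mem_erase.mpr ⟨Ne.symm hjk, hk⟩)
    · rw [ih' j hj]; exact h₂.adj_erase hAσ (mem_map_of_mem σ hj)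
    · rw [ih' k hk]; exact h₂.adj_erase hAσ (mem_map_of_mem σ hk)
  · rcases Nat.le_one_iff_eq_zero_or_eq_one.mp hcard with h | h
    · rw [card_eq_zero.mp h, Finset.map_empty, h₁.map_empty, h₂.map_empty]
    · obtain ⟨j, rfl⟩ := card_eq_one.mp h
      rw [map_singleton]
      exact hσF j (hA (mem_singleton_self j))

end IsLowerCube

namespace IsLowerCube

variable [DecidableEq V] {w : V} {T : Finset V} {F : Finset V → V}

lemma median_insert (hG : IsMedianGraph G) (hF : G.IsLowerCube v₀ u T F)
    (hwv : G.dist v₀ w + 1 = G.dist v₀ u) (hdw : ∀ A ⊆ T, G.dist w (F A) = 1 + #A)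
    {A : Finset V} (hA : A ⊆ T) {j : V} (hj : j ∈ T) (hjA : j ∉ A)
    (hadj : G.Adj (F A) (hG.median (F A) w v₀))
    (hlev : G.dist v₀ (hG.median (F A) w v₀) + 1 = G.dist v₀ (F A))
    (hdist : G.dist w (hG.median (F A) w v₀) = #A) :
    G.Adj (F (insert j A)) (hG.median (F (insert j A)) w v₀) ∧
      G.Adj (hG.median (F A) w v₀) (hG.median (F (insert j A)) w v₀) ∧
      G.dist v₀ (hG.median (F (insert j A)) w v₀) + 1 = G.dist v₀ (F (insert j A)) ∧
      G.dist w (hG.median (F (insert j A)) w v₀) = #(insert j A) := by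
  have hjA' : insert j A ⊆ T := insert_subset hj hA
  have h₁ := hF.dist_add_card hG hA
  have h₂ := hF.dist_add_card hG hjA'
  have h₃ := hdw _ hjA'
  rw [card_insert_of_notMem hjA] at h₂ h₃ ⊢
  have := G.dist_comm (u := w) (v := v₀)
  have := G.dist_comm (u := F (insert j A)) (v := v₀)
  exact hG.adj_median_of_dist_eq_add_two (hF.adj_insert hA hj hjA).symm hadj (by omega)
    hlev (by omega) hdist (by omega)

lemma median_spec (hG : IsMedianGraph G) (hF : G.IsLowerCube v₀ u T F)
    (hwv : G.dist v₀ w + 1 = G.dist v₀ u) (hdw : ∀ A ⊆ T, G.dist w (F A) = 1 + #A)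
    {A : Finset V} (hA : A ⊆ T) :
    G.Adj (F A) (hG.median (F A) w v₀) ∧
      G.dist v₀ (hG.median (F A) w v₀) + 1 = G.dist v₀ (F A) ∧
      G.dist w (hG.median (F A) w v₀) = #A := by
  induction A using Finset.induction_on with
  | empty =>
    have hw₁ : G.dist (F ∅) w = 1 := by rw [dist_comm, hdw ∅ (empty_subset T), card_empty]
    rw [hF.map_empty] at hw₁ ⊢
    have := G.dist_comm (u := w) (v := v₀)
    have := G.dist_comm (u := u) (v := v₀)
    have hmw : w = hG.median u w v₀ := hG.eq_median (by simp) (by omega) (by simp)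
    rw [← hmw, dist_self, card_empty]
    exact ⟨dist_eq_one_iff_adj.mp hw₁, hwv, rfl⟩
  | insert j A hjA ih =>
    have hA' : A ⊆ T := (subset_insert j A).trans hA
    obtain ⟨h₁, h₂, h₃⟩ := ih hA'
    obtain ⟨h₁', -, h₂', h₃'⟩ :=
      hF.median_insert hG hwv hdw hA' (hA (mem_insert_self j A)) hjA h₁ h₂ h₃
    exact ⟨h₁', h₂', h₃'⟩

lemma median_ne (hG : IsMedianGraph G) (hF : G.IsLowerCube v₀ u T F)
    (hwv : G.dist v₀ w + 1 = G.dist v₀ u) (hdw : ∀ A ⊆ T, G.dist w (F A) = 1 + #A)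
    {A B : Finset V} (hA : A ⊆ T) (hB : B ⊆ T) : hG.median (F A) w v₀ ≠ F B := by
  intro h
  obtain ⟨-, h₁, h₂⟩ := hF.median_spec hG hwv hdw hA
  have := hdw B hB
  have := hF.dist_add_card hG hA
  have := hF.dist_add_card hG hB
  rw [h] at h₁ h₂
  omega

lemma dist_median (hG : IsMedianGraph G) (hF : G.IsLowerCube v₀ u T F)
    (hwv : G.dist v₀ w + 1 = G.dist v₀ u) (hdw : ∀ A ⊆ T, G.dist w (F A) = 1 + #A)
    {A B : Finset V} (hA : A ⊆ T) (hB : B ⊆ T) :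
    G.dist (hG.median (F A) w v₀) (F B) = 1 + #(B ∆ A) :=
  hF.dist_eq_one_add_card_symmDiff hG (fun _ hC h => hF.median_ne hG hwv hdw hA hC h.symm) hA
    (hF.median_spec hG hwv hdw hA).1.symm hB

lemma isCubeOn_median (hG : IsMedianGraph G) (hF : G.IsLowerCube v₀ u T F)
    (hwv : G.dist v₀ w + 1 = G.dist v₀ u) (hdw : ∀ A ⊆ T, G.dist w (F A) = 1 + #A) :
    G.IsCubeOn T (fun A => hG.median (F A) w v₀) where
  injOn A hA B hB h := by
    have := hF.dist_median hG hwv hdw hA hB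
    rw [h, dist_comm, dist_eq_one_iff_adj.mpr (hF.median_spec hG hwv hdw hB).1] at this
    exact (symmDiff_eq_empty.mp (card_eq_zero.mp (by omega))).symm
  adj_iff A hA B hB := by
    constructor
    · intro hAB
      have h₁ := hF.dist_median hG hwv hdw hA hB
      have h₂ := hG.1.dist_triangle (u := hG.median (F A) w v₀) (v := hG.median (F B) w v₀)
        (w := F B)
      rw [dist_eq_one_iff_adj.mpr hAB, dist_comm (u := hG.median (F B) w v₀),
        dist_eq_one_iff_adj.mpr (hF.median_spec hG hwv hdw hB).1, h₁, symmDiff_comm] at h₂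
      have : #(A ∆ B) ≠ 0 := fun h =>
        hAB.ne (by rw [symmDiff_eq_empty.mp (card_eq_zero.mp h)])
      omega
    · intro h
      rcases exists_eq_insert_of_card_symmDiff_eq_one h with ⟨j, hjA, rfl⟩ | ⟨j, hjB, rfl⟩
      · obtain ⟨h₁, h₂, h₃⟩ := hF.median_spec hG hwv hdw hA
        exact (hF.median_insert hG hwv hdw hA (hB (mem_insert_self j A)) hjA h₁ h₂ h₃).2.1
      · obtain ⟨h₁, h₂, h₃⟩ := hF.median_spec hG hwv hdw hB
        exact (hF.median_insert hG hwv hdw hB (hA (mem_insert_self j B)) hjB h₁ h₂ h₃).2.1.symm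

/-- The cube and its copy `A ↦ median (F A) w v₀`, shifted towards `w`, form a prism. -/
lemma exists_insert (hG : IsMedianGraph G) (hF : G.IsLowerCube v₀ u T F)
    (hFT : ∀ t ∈ T, F {t} = t) (hw : G.Adj u w) (hwv : G.dist v₀ w + 1 = G.dist v₀ u)
    (hwT : w ∉ T) :
    ∃ F' : Finset V → V, G.IsLowerCube v₀ u (insert w T) F' ∧ ∀ t ∈ insert w T, F' {t} = t := by
  have hwF : ∀ A ⊆ T, F A ≠ w := fun A hA h => by
    have := hF.dist_add_card hG hA
    rw [h] at this
    obtain ⟨t, rfl⟩ := card_eq_one.mp (by omega : #A = 1)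
    have htw := hFT t (hA (mem_singleton_self t))
    rw [h] at htw
    subst htw
    exact hwT (hA (mem_singleton_self _))
  have hdw : ∀ A ⊆ T, G.dist w (F A) = 1 + #A := fun A hA => by
    simpa using hF.dist_eq_one_add_card_symmDiff hG hwF (empty_subset T)
      (hF.map_empty ▸ hw.symm) hA
  have hprism := hF.prism (w := w) (hF.isCubeOn_median hG hwv hdw)
    (fun A hA => (hF.median_spec hG hwv hdw hA).1) (fun A hA B hB => hF.median_ne hG hwv hdw hA hB)
    (fun A hA B hB h => by
      have := hF.dist_median hG hwv hdw hA hB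
      rw [dist_eq_one_iff_adj.mpr h] at this
      exact (symmDiff_eq_empty.mp (card_eq_zero.mp (by omega))).symm)
  have hmw : hG.median (F ∅) w v₀ = w := by
    have := (hF.median_spec hG hwv hdw (empty_subset T)).2.2
    exact (hG.1.dist_eq_zero_iff.mp this).symm
  have hatoms : ∀ t ∈ insert w T, (fun A => if w ∈ A then hG.median (F (A.erase w)) w v₀
      else F A) {t} = t := by
    intro t ht
    rcases mem_insert.mp ht with rfl | ht
    · simp [hmw]
    · have htw : t ≠ w := fun h => hwT (h ▸ ht)
      simp [Ne.symm htw, hFT t ht]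
  refine ⟨_, ⟨hprism, by simp [hF.map_empty], fun t ht => ?_⟩, hatoms⟩
  have h := hatoms t ht
  dsimp only at h ⊢
  rw [h]
  rcases mem_insert.mp ht with rfl | ht
  · exact hwv
  · simpa [hFT t ht] using hF.dist_map_singleton t ht

end IsLowerCube

theorem exists_isLowerCube [DecidableEq V] (hG : IsMedianGraph G) (v₀ u : V) (T : Finset V)
    (hT : ∀ t ∈ T, G.Adj u t ∧ G.dist v₀ t + 1 = G.dist v₀ u) :
    ∃ F : Finset V → V, G.IsLowerCube v₀ u T F ∧ ∀ t ∈ T, F {t} = t := by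
  induction T using Finset.induction_on with
  | empty =>
    refine ⟨fun _ => u, ⟨⟨fun A hA B hB _ => ?_, fun A hA B hB => ?_⟩, rfl, by simp⟩, by simp⟩
    · rw [subset_empty.mp hA, subset_empty.mp hB]
    · simp [subset_empty.mp hA, subset_empty.mp hB]
  | insert w T hwT ih =>
    obtain ⟨F, hF, hFT⟩ := ih fun t ht => hT t (mem_insert_of_mem ht)
    obtain ⟨hw, hwv⟩ := hT w (mem_insert_self w T)
    exact hF.exists_insert hG hFT hw hwv hwT

namespace IsLowerCube

variable [DecidableEq V] {v₀ u : V} {T : Finset V} {F : Finset V → V}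

lemma mem_iff_adj (hF : G.IsLowerCube v₀ u T F) (hFT : ∀ t ∈ T, F {t} = t) {t : V} :
    t ∈ T ↔ t ∈ F '' ↑T.powerset ∧ G.Adj u t := by
  constructor
  · intro ht
    refine ⟨⟨{t}, by simpa using ht, hFT t ht⟩, ?_⟩
    simpa [hF.map_empty, hFT t ht] using hF.adj_singleton ht
  · rintro ⟨⟨A, hA, rfl⟩, hadj⟩
    rw [mem_coe, mem_powerset] at hA
    rw [← hF.map_empty, hF.adj_iff (empty_subset T) hA, empty_symmDiff] at hadj
    obtain ⟨j, rfl⟩ := card_eq_one.mp hadj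
    rw [hFT j (hA (mem_singleton_self j))]
    exact hA (mem_singleton_self j)

/-- The top `u` is the only vertex of the cube at its level, so the image of a lower cube
determines `u`, and then `T` as the neighbours of `u` in it. -/
lemma eq_of_image_eq (hG : IsMedianGraph G) (hF : G.IsLowerCube v₀ u T F)
    (hFT : ∀ t ∈ T, F {t} = t) {u' : V} {T' : Finset V} {F' : Finset V → V}
    (hF' : G.IsLowerCube v₀ u' T' F') (hF'T : ∀ t ∈ T', F' {t} = t)
    (h : F '' ↑T.powerset = F' '' ↑T'.powerset) : u = u' ∧ T = T' := by
  have hu : u ∈ F' '' ↑T'.powerset := h ▸ ⟨∅, by simp, hF.map_empty⟩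
  have hu' : u' ∈ F '' ↑T.powerset := h.symm ▸ ⟨∅, by simp, hF'.map_empty⟩
  obtain ⟨B, hB, hBu⟩ := hu
  obtain ⟨A, hA, hAu⟩ := hu'
  rw [mem_coe, mem_powerset] at hA hB
  have h₁ := hF.dist_add_card hG hA
  have h₂ := hF'.dist_add_card hG hB
  rw [hAu] at h₁
  rw [hBu] at h₂
  have hB₀ : B = ∅ := card_eq_zero.mp (by omega)
  have huu' : u = u' := by rw [← hBu, hB₀, hF'.map_empty]
  subst huu'
  exact ⟨rfl, ext fun t => by rw [hF.mem_iff_adj hFT, hF'.mem_iff_adj hF'T, h]⟩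

end IsLowerCube

end SimpleGraph

lemma cubeGraph_adj_decide_iff {n : ℕ} {A B : Finset (Fin n)} :
    (cubeGraph n).Adj (fun i => decide (i ∈ A)) (fun i => decide (i ∈ B)) ↔ #(A ∆ B) = 1 := by
  rw [card_eq_one_iff_existsUnique]
  refine existsUnique_congr fun i => ?_
  by_cases hA : i ∈ A <;> by_cases hB : i ∈ B <;> simp [mem_symmDiff, hA, hB]

namespace SimpleGraph

section

variable {n : ℕ} {S : Set V}

lemma nonempty_iso_cubeGraph_iff :
    Nonempty (G.induce S ≃g cubeGraph n) ↔
      ∃ F : Finset (Fin n) → V, G.IsCubeOn univ F ∧ Set.range F = S := by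
  have hdecide : ∀ x : Fin n → Bool, (fun i => decide (i ∈ ({i | x i} : Finset (Fin n)))) = x :=
    fun x => by ext; simp
  constructor
  · rintro ⟨e⟩
    refine ⟨fun A => e.symm (fun i => decide (i ∈ A)), ⟨fun A _ B _ h => ?_, fun A _ B _ => ?_⟩,
      Set.Subset.antisymm (Set.range_subset_iff.mpr fun A => (e.symm _).2) fun v hv => ?_⟩
    · ext i
      simpa using congrFun (e.symm.injective (Subtype.ext h)) i
    · exact e.symm.map_adj_iff.trans cubeGraph_adj_decide_iff
    · exact ⟨({i | e ⟨v, hv⟩ i} : Finset (Fin n)), by simp only [hdecide, RelIso.symm_apply_apply]⟩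
  · rintro ⟨F, hF, rfl⟩
    have hinj : Function.Injective fun x : Fin n → Bool => F {i | x i} := fun x y h => by
      rw [← hdecide x, ← hdecide y, hF.injOn (subset_univ _) (subset_univ _) h]
    let f : cubeGraph n ↪g G := ⟨⟨fun x => F {i | x i}, hinj⟩, fun {x y} => by
      change G.Adj (F _) (F _) ↔ _
      conv_rhs => rw [← hdecide x, ← hdecide y]
      rw [hF.adj_iff (subset_univ _) (subset_univ _), cubeGraph_adj_decide_iff]⟩
    have hf : Set.range f = Set.range F := by
      refine Set.Subset.antisymm (Set.range_subset_iff.mpr fun x => ⟨_, rfl⟩) ?_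
      rintro _ ⟨A, rfl⟩
      exact ⟨fun i => decide (i ∈ A), by simp [f]⟩
    exact ⟨hf ▸ (Embedding.isoInduceRange f).symm⟩

lemma IsCubeOn.exists_fin {T : Finset V} [DecidableEq V] {F : Finset V → V}
    (hF : G.IsCubeOn T F) (hT : #T = n) :
    ∃ F' : Finset (Fin n) → V, G.IsCubeOn univ F' ∧ Set.range F' = F '' ↑T.powerset := by
  let φ : Fin n ↪ V := (T.equivFinOfCardEq hT).symm.toEmbedding.trans (.subtype (· ∈ T))
  have hφ : univ.map φ = T := by
    rw [← Finset.map_map, map_univ_equiv, univ_eq_attach, attach_map_val]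
  refine ⟨fun A => F (A.map φ), hF.comp_map φ hφ, ?_⟩
  ext v
  simp only [Set.mem_range, Set.mem_image, coe_powerset, Set.mem_preimage, Set.mem_powerset_iff,
    coe_subset]
  constructor
  · rintro ⟨A, rfl⟩
    exact ⟨A.map φ, hφ ▸ map_subset_map.mpr (subset_univ A), rfl⟩
  · rintro ⟨B, hB, rfl⟩
    obtain ⟨A, -, rfl⟩ := subset_map_iff.mp (hφ ▸ hB)
    exact ⟨A, rfl⟩

/-- Here `u` is the vertex of the cube farthest from `v₀`. -/
lemma exists_image_eq_of_iso [DecidableEq V] (hG : IsMedianGraph G) (v₀ : V)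
    (hS : Nonempty (G.induce S ≃g cubeGraph n)) :
    ∃ u, ∃ T : Finset V, (∀ t ∈ T, G.Adj u t ∧ G.dist v₀ t + 1 = G.dist v₀ u) ∧ #T = n ∧
      ∀ F, G.IsLowerCube v₀ u T F → (∀ t ∈ T, F {t} = t) → F '' ↑T.powerset = S := by
  obtain ⟨F₀, hF₀, rfl⟩ := nonempty_iso_cubeGraph_iff.mp hS
  obtain ⟨R, -, hF₁⟩ := hF₀.exists_isLowerCube hG v₀
  set F₁ : Finset (Fin n) → V := fun A => F₀ (A ∆ R)
  let σ : Fin n ↪ V := ⟨fun j => F₁ {j}, fun j k h => by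
    simpa using hF₁.injOn (subset_univ {j}) (subset_univ {k}) h⟩
  refine ⟨F₀ R, univ.map σ, fun t ht => ?_, by simp, fun F hF hFT => ?_⟩
  · obtain ⟨j, -, rfl⟩ := mem_map.mp ht
    exact ⟨hF₁.map_empty ▸ hF₁.adj_singleton (mem_univ j), hF₁.dist_map_singleton j (mem_univ j)⟩
  · have heq : ∀ A, F₁ A = F (A.map σ) := fun A => hF₁.eq_map_map hG hF σ subset_rfl
      (fun j _ => (hFT _ (mem_map_of_mem σ (mem_univ j))).symm) (subset_univ A)
    ext v
    simp only [Set.mem_image, coe_powerset, Set.mem_preimage, Set.mem_powerset_iff, coe_subset,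
      Set.mem_range]
    constructor
    · rintro ⟨B, hB, rfl⟩
      obtain ⟨A, -, rfl⟩ := subset_map_iff.mp hB
      exact ⟨A ∆ R, by rw [← heq]⟩
    · rintro ⟨A, rfl⟩
      exact ⟨(A ∆ R).map σ, map_subset_map.mpr (subset_univ _), by rw [← heq]; simp [F₁]⟩

end

variable [Fintype V]

open Classical in
noncomputable def lowerNeighbors (G : SimpleGraph V) (v₀ u : V) : Finset V :=
  {t | G.Adj u t ∧ G.dist v₀ t + 1 = G.dist v₀ u}

lemma mem_lowerNeighbors {v₀ u t : V} :
    t ∈ G.lowerNeighbors v₀ u ↔ G.Adj u t ∧ G.dist v₀ t + 1 = G.dist v₀ u := by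
  simp [lowerNeighbors]

lemma lowerNeighbors_eq_empty_iff (hconn : G.Connected) {v₀ u : V} :
    G.lowerNeighbors v₀ u = ∅ ↔ u = v₀ := by
  rw [eq_empty_iff_forall_notMem]
  constructor
  · intro h
    by_contra huv
    obtain ⟨t, ht, htv⟩ := hconn.exists_adj_dist_add_one_eq huv
    exact h t (mem_lowerNeighbors.mpr ⟨ht, by rwa [dist_comm, dist_comm (u := v₀)]⟩)
  · rintro rfl t ht
    simpa using (mem_lowerNeighbors.mp ht).2

theorem cubeCount_eq_sum_choose (hG : IsMedianGraph G) (v₀ : V) (n : ℕ) :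
    cubeCount G n = ∑ u, (#(G.lowerNeighbors v₀ u)).choose n := by
  classical
  set P : Finset (Σ _ : V, Finset V) :=
    univ.sigma fun u => (G.lowerNeighbors v₀ u).powersetCard n
  have hP : ∀ {p : Σ _ : V, Finset V}, p ∈ P ↔
      (∀ t ∈ p.2, G.Adj p.1 t ∧ G.dist v₀ t + 1 = G.dist v₀ p.1) ∧ #p.2 = n := by
    simp [P, mem_powersetCard, subset_iff, mem_lowerNeighbors]
  choose F hF hFT using fun p (hp : p ∈ P) => exists_isLowerCube hG v₀ p.1 p.2 (hP.mp hp).1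
  calc cubeCount G n = Set.ncard {S : Set V | Nonempty (G.induce S ≃g cubeGraph n)} := rfl
    _ = (P : Set (Σ _ : V, Finset V)).ncard := by
      refine (Set.ncard_congr (fun p hp => F p hp '' (p.2.powerset : Set (Finset V)))
        (fun p hp => ?_) (fun p q hp hq h => ?_) (fun S hS => ?_)).symm
      · exact nonempty_iso_cubeGraph_iff.mpr ((hF p hp).exists_fin (hP.mp hp).2)
      · obtain ⟨hu, hT⟩ := (hF p hp).eq_of_image_eq hG (hFT p hp) (hF q hq) (hFT q hq) h
        exact Sigma.ext hu (heq_of_eq hT)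
      · obtain ⟨u, T, hT, hcard, hST⟩ := exists_image_eq_of_iso hG v₀ hS
        have hp : ⟨u, T⟩ ∈ P := hP.mpr ⟨hT, hcard⟩
        exact ⟨⟨u, T⟩, hp, hST _ (hF _ hp) (hFT _ hp)⟩
    _ = ∑ u, (#(G.lowerNeighbors v₀ u)).choose n := by
      rw [Set.ncard_coe_finset, card_sigma]
      simp only [card_powersetCard]

end SimpleGraph

end

/-- For a finite median graph `G`,
`Σ_i (−1)ⁱ α_i(G) = 1`; equivalently, `C(G,−1) = 1`. -/
theorem cubePoly_eval_neg_one {V : Type*} [Fintype V] (G : SimpleGraph V)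
    (hG : IsMedianGraph G) :
    (∑ i ∈ Finset.range (Nat.card V + 1), (-1 : ℤ) ^ i * (cubeCount G i : ℤ) = 1) ∧
      (cubePoly G).eval (-1 : ℤ) = 1 := by
  classical
  obtain ⟨v₀⟩ := hG.1.nonempty
  have hsum : ∑ i ∈ Finset.range (Nat.card V + 1), (-1 : ℤ) ^ i * (cubeCount G i : ℤ) = 1 := by
    simp_rw [cubeCount_eq_sum_choose hG v₀, Nat.cast_sum, mul_sum]
    rw [sum_comm]
    have hle : ∀ u, #(G.lowerNeighbors v₀ u) ≤ Nat.card V := fun u => by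
      rw [Nat.card_eq_fintype_card]; exact card_le_univ _
    simp_rw [Int.alternating_sum_range_choose_of_le (hle _), card_eq_zero,
      lowerNeighbors_eq_empty_iff hG.1, sum_ite_eq', mem_univ, if_true]
  refine ⟨hsum, ?_⟩
  simpa [cubePoly, eval_finsetSum, mul_comm] using hsum
end

section
/- Let G be a finite simple graph and let {G_1, G_2} be a cubical cover of G with G_0 the induced subgraph on V(G_1) ∩ V(G_2), and let G* be the expansion of G with respect to {G_1, G_2}. Then C(G*, x) = C(G_1, x) + C(G_2, x) + x·C(G_0, x). -/
open SimpleGraph Polynomial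

/-- The expansion of `G` with respect to a pair of induced subgraphs given by
vertex sets `S₁` and `S₂`: the disjoint union of copies of `G.induce S₁` and
`G.induce S₂`, with an edge between the two copies of each vertex of
`S₁ ∩ S₂`. -/
def expansionGraph {V : Type*} (G : SimpleGraph V) (S₁ S₂ : Set V) :
    SimpleGraph (↥S₁ ⊕ ↥S₂) where
  Adj x y :=
    match x, y with
    | Sum.inl u, Sum.inl v => G.Adj u v
    | Sum.inr u, Sum.inr v => G.Adj u v
    | Sum.inl u, Sum.inr v => (u : V) = (v : V)
    | Sum.inr u, Sum.inl v => (u : V) = (v : V)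
  symm := by
    constructor
    rintro (u | u) (v | v) h
    · exact G.adj_symm h
    · exact h.symm
    · exact h.symm
    · exact G.adj_symm h
  loopless := by
    constructor
    rintro (u | u) h
    · exact G.irrefl h
    · exact G.irrefl h

/-!
The expansion `G*` is the subgraph of the prism `K₂ □ G` induced on `{0} × S₁ ∪ {1} × S₂`.
An induced cube of `G*` either lies in one of the two layers, where it is an induced cube of
`G₁` or of `G₂`, or it meets both. In the latter case every vertex of the cube has at most one
neighbour in the other layer, and a 2-colouring of `Q_i` with this property is a coordinate
function; so the cube is `K₂ □ Q_{i-1}` over an induced `(i-1)`-cube of `G` lying in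
`S₁ ∩ S₂`, i.e. over an induced cube of `G₀`. Hence `α_i(G*) = α_i(G₁) + α_i(G₂) + α_{i-1}(G₀)`.
-/

abbrev prism {W : Type*} (H : SimpleGraph W) : SimpleGraph (Bool × W) := boxProd ⊤ H

namespace cubeGraph

variable {n m : ℕ}

theorem adj_iff_hammingDist_eq_one {f g : Fin n → Bool} :
    (cubeGraph n).Adj f g ↔ hammingDist f g = 1 :=
  Fintype.existsUnique_iff_card_one _

theorem hammingDist_insertNth (j : Fin (m + 1)) (a b : Bool) (p q : Fin m → Bool) :
    hammingDist (j.insertNth a p : Fin (m + 1) → Bool) (j.insertNth b q) =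
      (if a = b then 0 else 1) + hammingDist p q := by
  simp only [hammingDist, Finset.card_filter, Fin.sum_univ_succAbove _ j,
    Fin.insertNth_apply_same, Fin.insertNth_apply_succAbove, ite_not]

def insertNthIso (j : Fin (m + 1)) : prism (cubeGraph m) ≃g cubeGraph (m + 1) where
  toEquiv := Fin.insertNthEquiv (fun _ ↦ Bool) j
  map_rel_iff' {x y} := by
    change (cubeGraph (m + 1)).Adj (j.insertNth x.1 x.2 : Fin (m + 1) → Bool)
      (j.insertNth y.1 y.2) ↔ _
    rw [adj_iff_hammingDist_eq_one, hammingDist_insertNth, boxProd_adj, top_adj,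
      adj_iff_hammingDist_eq_one, ← hammingDist_eq_zero]
    by_cases h : x.1 = y.1 <;> simp [h]

@[simp] theorem insertNthIso_apply (j : Fin (m + 1)) (a : Bool) (p : Fin m → Bool) :
    insertNthIso j (a, p) = (j.insertNth a p : Fin (m + 1) → Bool) := rfl

def flipAt (j : Fin n) (f : Fin n → Bool) : Fin n → Bool := Function.update f j (!f j)

@[simp] theorem flipAt_apply_self (j : Fin n) (f : Fin n → Bool) : flipAt j f j = !f j := by
  simp [flipAt]

theorem flipAt_apply_of_ne {j k : Fin n} (h : k ≠ j) (f : Fin n → Bool) : flipAt j f k = f k := by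
  simp [flipAt, h]

@[simp] theorem flipAt_flipAt (j : Fin n) (f : Fin n → Bool) : flipAt j (flipAt j f) = f := by
  simp [flipAt]

theorem flipAt_comm (j k : Fin n) (f : Fin n → Bool) :
    flipAt j (flipAt k f) = flipAt k (flipAt j f) := by
  rcases eq_or_ne j k with rfl | h
  · rfl
  · simp only [flipAt, Function.update_of_ne h, Function.update_of_ne h.symm,
      Function.update_comm h]

theorem eq_of_flipAt_eq {j k : Fin n} {f : Fin n → Bool} (h : flipAt j f = flipAt k f) : j = k := by
  by_contra hjk
  simpa [flipAt_apply_of_ne hjk] using congrFun h j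

theorem adj_flipAt (j : Fin n) (f : Fin n → Bool) : (cubeGraph n).Adj f (flipAt j f) :=
  ⟨j, by simp, fun k hk ↦ by_contra fun hkj ↦ hk (flipAt_apply_of_ne hkj f).symm⟩

theorem flipAt_induction {P : (Fin n → Bool) → Prop} (hP : ∀ j f, P f → P (flipAt j f))
    {f : Fin n → Bool} (hf : P f) (g : Fin n → Bool) : P g := by
  classical
  suffices ∀ s : Finset (Fin n), ∀ g, (∀ k ∉ s, g k = f k) → P g from
    this Finset.univ g (by simp)
  intro s
  induction s using Finset.induction_on with
  | empty => intro g hg; rwa [funext fun k ↦ hg k (Finset.notMem_empty k)]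
  | insert a s _ ih =>
    intro g hg
    have hg' : ∀ k ∉ s, Function.update g a (f a) k = f k := by
      intro k hk
      rcases eq_or_ne k a with rfl | hka
      · simp
      · simpa [hka] using hg k (by simp [hka, hk])
    rcases Bool.eq_or_eq_not (g a) (f a) with hga | hga
    · simpa [← hga] using ih _ hg'
    · convert hP a _ (ih _ hg') using 1
      funext k
      rcases eq_or_ne k a with rfl | hka
      · simp [hga]
      · simp [flipAt_apply_of_ne hka, hka]

theorem exists_eq_xor_apply (c : (Fin n → Bool) → Bool) (hc : ∃ f g, c f ≠ c g)
    (huniq : ∀ f g g', (cubeGraph n).Adj f g → (cubeGraph n).Adj f g' → c g ≠ c f → c g' ≠ c f →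
      g = g') :
    ∃ j b, ∀ f, c f = xor b (f j) := by
  have unique : ∀ f j k, c (flipAt j f) ≠ c f → c (flipAt k f) ≠ c f → j = k :=
    fun f j k hj hk ↦ eq_of_flipAt_eq (huniq _ _ _ (adj_flipAt j f) (adj_flipAt k f) hj hk)
  obtain ⟨f₀, j, hj⟩ : ∃ f j, c (flipAt j f) ≠ c f := by
    by_contra! h
    obtain ⟨f, g, hfg⟩ := hc
    exact hfg (flipAt_induction (P := (c · = c f)) (fun j g hg ↦ (h g j).trans hg) rfl g).symm
  -- A bichromatic `j`-edge stays bichromatic when moved across any square.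
  have switch : ∀ f, c (flipAt j f) ≠ c f := by
    refine flipAt_induction (fun k f hf ↦ ?_) hj
    rcases eq_or_ne k j with rfl | hkj
    · simpa using hf.symm
    · have h₁ : c (flipAt k f) = c f := not_not.1 fun h ↦ hkj (unique f k j h hf)
      have h₂ : c (flipAt k (flipAt j f)) = c (flipAt j f) :=
        not_not.1 fun h ↦ hkj (unique _ k j h (by simpa using hf.symm))
      rwa [flipAt_comm, h₂, h₁]
  have keep : ∀ f k, k ≠ j → c (flipAt k f) = c f :=
    fun f k hkj ↦ not_not.1 fun h ↦ hkj (unique f k j h (switch f))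
  refine ⟨j, xor (c f₀) (f₀ j), flipAt_induction (P := fun f ↦ c f = xor (xor (c f₀) (f₀ j)) (f j))
    (fun k f hf ↦ ?_) (f := f₀) (by simp)⟩
  rcases eq_or_ne k j with rfl | hkj
  · rw [Bool.eq_not_iff.2 (switch f), hf]
    simp
  · rw [keep f k hkj, flipAt_apply_of_ne hkj.symm, hf]

end cubeGraph

section CubeSets

variable {W W' : Type*} {H : SimpleGraph W} {G : SimpleGraph W'} {i : ℕ}

def cubeSets (H : SimpleGraph W) (i : ℕ) : Set (Set W) :=
  Set.range fun φ : cubeGraph i ↪g H ↦ Set.range φ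

theorem mem_cubeSets_iff {S : Set W} : S ∈ cubeSets H i ↔ Nonempty (H.induce S ≃g cubeGraph i) := by
  constructor
  · rintro ⟨φ, rfl⟩
    exact ⟨φ.isoInduceRange.symm⟩
  · rintro ⟨e⟩
    refine ⟨(Embedding.induce S).comp e.symm.toEmbedding, ?_⟩
    change Set.range (Subtype.val ∘ e.symm) = S
    rw [e.symm.surjective.range_comp, Subtype.range_coe]

theorem cubeCount_eq_ncard (H : SimpleGraph W) (i : ℕ) : cubeCount H i = (cubeSets H i).ncard := by
  rw [cubeCount, ← Nat.card_coe_set_eq]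
  exact Nat.card_congr (Equiv.subtypeEquivRight fun S ↦ mem_cubeSets_iff.symm)

theorem nonempty_of_mem_cubeSets {S : Set W} (hS : S ∈ cubeSets H i) : S.Nonempty := by
  obtain ⟨φ, rfl⟩ := hS
  exact Set.range_nonempty φ

theorem cubeSets_eq_empty_of_card_lt [Finite W] (h : Nat.card W < i) : cubeSets H i = ∅ := by
  refine Set.eq_empty_of_forall_notMem ?_
  rintro _ ⟨φ, -⟩
  have hle : 2 ^ i ≤ Nat.card W := by simpa using Nat.card_le_card_of_injective φ φ.injective
  have := Nat.lt_two_pow_self (n := i)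
  omega

theorem coeff_cubePoly [Finite W] (H : SimpleGraph W) (i : ℕ) :
    (cubePoly H).coeff i = cubeCount H i := by
  simp only [cubePoly, finsetSum_coeff, coeff_C_mul_X_pow, Finset.sum_ite_eq, Finset.mem_range]
  split_ifs with h
  · rfl
  · rw [cubeCount_eq_ncard, cubeSets_eq_empty_of_card_lt (by omega), Set.ncard_empty, Nat.cast_zero]

namespace SimpleGraph.Embedding

theorem image_mem_cubeSets (ψ : H ↪g G) {S : Set W} (hS : S ∈ cubeSets H i) :
    ψ '' S ∈ cubeSets G i := by
  obtain ⟨φ, rfl⟩ := hS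
  exact ⟨ψ.comp φ, Set.range_comp ψ φ⟩

theorem image_cubeSets (ψ : H ↪g G) :
    Set.image ψ '' cubeSets H i = {S ∈ cubeSets G i | S ⊆ Set.range ψ} := by
  ext S
  constructor
  · rintro ⟨T, hT, rfl⟩
    exact ⟨ψ.image_mem_cubeSets hT, Set.image_subset_range ψ T⟩
  · rintro ⟨⟨φ, rfl⟩, hφ⟩
    let φ' : cubeGraph i ↪g G.induce (Set.range ψ) :=
      { toFun x := ⟨φ x, hφ ⟨x, rfl⟩⟩
        inj' x y h := φ.injective (congrArg Subtype.val h)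
        map_rel_iff' := φ.map_rel_iff' }
    refine ⟨_, ⟨ψ.isoInduceRange.symm.toEmbedding.comp φ', rfl⟩, ?_⟩
    rw [← Set.range_comp]
    exact congrArg Set.range (funext fun x ↦ Equiv.apply_ofInjective_symm ψ.injective (φ' x))

theorem cubeCount_eq (ψ : H ↪g G) (i : ℕ) :
    cubeCount H i = {S ∈ cubeSets G i | S ⊆ Set.range ψ}.ncard := by
  rw [← ψ.image_cubeSets, Set.ncard_image_of_injective _ (Set.image_injective.2 ψ.injective),
    cubeCount_eq_ncard]

variable {V V' : Type*} {K : SimpleGraph V} {K' : SimpleGraph V'}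

def boxProdMap (φ : H ↪g G) (ψ : K ↪g K') : H.boxProd K ↪g G.boxProd K' where
  toEmbedding := φ.toEmbedding.prodMap ψ.toEmbedding
  map_rel_iff' := by simp [boxProd_adj]

end SimpleGraph.Embedding

end CubeSets

section Prism

variable {W : Type*} {H : SimpleGraph W} {i m : ℕ}

theorem univ_prod_mem_cubeSets {T : Set W} (hT : T ∈ cubeSets H m) :
    Set.univ ×ˢ T ∈ cubeSets (prism H) (m + 1) := by
  obtain ⟨φ, rfl⟩ := hT
  refine ⟨(Embedding.refl.boxProdMap φ).comp (cubeGraph.insertNthIso 0).symm.toEmbedding, ?_⟩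
  change Set.range (Prod.map id φ ∘ (cubeGraph.insertNthIso 0).symm) = _
  rw [(cubeGraph.insertNthIso 0).symm.surjective.range_comp, Set.range_prodMap, Set.range_id]

theorem prism_snd_eq_of_adj {x y : Bool × W} (h : (prism H).Adj x y) (hne : x.1 ≠ y.1) :
    x.2 = y.2 := by
  rcases boxProd_adj.1 h with ⟨-, h⟩ | ⟨-, h⟩
  · exact h
  · exact absurd h hne

theorem exists_range_eq_univ_prod (ψ : cubeGraph (m + 1) ↪g prism H) {j : Fin (m + 1)} {b : Bool}
    (hc : ∀ f, (ψ f).1 = xor b (f j)) : ∃ T ∈ cubeSets H m, Set.range ψ = Set.univ ×ˢ T := by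
  let φ₀ (p : Fin m → Bool) : W := (ψ (j.insertNth false p)).2
  have hψ : ∀ a p, ψ (j.insertNth a p) = (xor b a, φ₀ p) := by
    intro a p
    refine Prod.ext (by simp [hc]) ?_
    cases a
    · rfl
    · refine (prism_snd_eq_of_adj (ψ.map_adj_iff.2 ?_) (by simp [hc])).symm
      simpa using (cubeGraph.insertNthIso j).map_adj_iff.2
        (show (prism (cubeGraph m)).Adj (false, p) (true, p) by simp [boxProd_adj])
  let φ : cubeGraph m ↪g H :=
    { toFun := φ₀
      inj' p q h := by
        have : ψ (j.insertNth false p) = ψ (j.insertNth false q) := by rw [hψ, hψ, h]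
        exact Fin.insertNth_right_injective _ (ψ.injective this)
      map_rel_iff' {p q} := by
        change H.Adj (φ₀ p) (φ₀ q) ↔ _
        rw [← boxProd_adj_right (G := ⊤) (a := xor b false), ← hψ, ← hψ, ψ.map_adj_iff,
          ← cubeGraph.insertNthIso_apply, ← cubeGraph.insertNthIso_apply,
          (cubeGraph.insertNthIso j).map_adj_iff, boxProd_adj_right] }
  refine ⟨Set.range φ, ⟨φ, rfl⟩, ?_⟩
  ext ⟨a, w⟩
  simp only [Set.mem_range, Set.mem_prod, Set.mem_univ, true_and]
  constructor
  · rintro ⟨f, hf⟩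
    refine ⟨j.removeNth f, ?_⟩
    rw [← Fin.insertNth_self_removeNth j f, hψ] at hf
    exact congrArg Prod.snd hf
  · rintro ⟨p, rfl⟩
    exact ⟨j.insertNth (xor b a) p, by simp only [hψ, Bool.bne_self_left]; rfl⟩

theorem exists_eq_univ_prod_of_mem_cubeSets {S : Set (Bool × W)} (hS : S ∈ cubeSets (prism H) i)
    (hS₂ : ∃ x ∈ S, ∃ y ∈ S, x.1 ≠ y.1) :
    ∃ m T, i = m + 1 ∧ T ∈ cubeSets H m ∧ S = Set.univ ×ˢ T := by
  obtain ⟨ψ, rfl⟩ := hS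
  have hnc : ∃ f g, (ψ f).1 ≠ (ψ g).1 := by
    obtain ⟨_, ⟨f, rfl⟩, _, ⟨g, rfl⟩, h⟩ := hS₂
    exact ⟨f, g, h⟩
  -- The edges between the two layers form a matching.
  have huniq : ∀ f g g', (cubeGraph i).Adj f g → (cubeGraph i).Adj f g' →
      (ψ g).1 ≠ (ψ f).1 → (ψ g').1 ≠ (ψ f).1 → g = g' := by
    intro f g g' hg hg' hne hne'
    refine ψ.injective (Prod.ext ?_ ?_)
    · revert hne hne'
      cases (ψ f).1 <;> cases (ψ g).1 <;> cases (ψ g').1 <;> simp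
    · exact (prism_snd_eq_of_adj (ψ.map_adj_iff.2 hg) hne.symm).symm.trans
        (prism_snd_eq_of_adj (ψ.map_adj_iff.2 hg') hne'.symm)
  obtain ⟨j, b, hc⟩ := cubeGraph.exists_eq_xor_apply (fun f ↦ (ψ f).1) hnc huniq
  obtain _ | m := i
  · exact j.elim0
  obtain ⟨T, hT, hψ⟩ := exists_range_eq_univ_prod ψ hc
  exact ⟨m, T, rfl, hT, hψ⟩

end Prism

namespace expansionGraph

variable {V : Type*} (G : SimpleGraph V) (S₁ S₂ : Set V) {i : ℕ}

def inlEmbedding : G.induce S₁ ↪g expansionGraph G S₁ S₂ where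
  toFun := Sum.inl
  inj' := Sum.inl_injective
  map_rel_iff' := Iff.rfl

def inrEmbedding : G.induce S₂ ↪g expansionGraph G S₁ S₂ where
  toFun := Sum.inr
  inj' := Sum.inr_injective
  map_rel_iff' := Iff.rfl

def toPrism : expansionGraph G S₁ S₂ ↪g prism G where
  toFun x := (x.isRight, Sum.elim (↑) (↑) x)
  inj' := by rintro (u | u) (v | v) h <;> simp_all [Subtype.ext_iff]
  map_rel_iff' {x y} := by
    change (prism G).Adj (x.isRight, Sum.elim (↑) (↑) x) (y.isRight, Sum.elim (↑) (↑) y) ↔ _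
    rcases x with u | u <;> rcases y with v | v <;> simp [boxProd_adj, expansionGraph, eq_comm]

@[simp] theorem toPrism_apply (x : ↥S₁ ⊕ ↥S₂) :
    toPrism G S₁ S₂ x = (x.isRight, Sum.elim (↑) (↑) x) := rfl

theorem range_toPrism : Set.range (toPrism G S₁ S₂) = {false} ×ˢ S₁ ∪ {true} ×ˢ S₂ := by
  ext ⟨_ | _, v⟩ <;> simp

def prismEmbedding : prism (G.induce (S₁ ∩ S₂)) ↪g expansionGraph G S₁ S₂ where
  toFun x := bif x.1 then .inr ⟨x.2, x.2.2.2⟩ else .inl ⟨x.2, x.2.2.1⟩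
  inj' := by rintro ⟨_ | _, w⟩ ⟨_ | _, w'⟩ h <;> simp_all [Subtype.ext_iff]
  map_rel_iff' {x y} := by
    change (expansionGraph G S₁ S₂).Adj (bif x.1 then .inr ⟨x.2, x.2.2.2⟩ else .inl ⟨x.2, x.2.2.1⟩)
      (bif y.1 then .inr ⟨y.2, y.2.2.2⟩ else .inl ⟨y.2, y.2.2.1⟩) ↔ _
    obtain ⟨_ | _, w⟩ := x <;> obtain ⟨_ | _, w'⟩ := y <;>
      simp [boxProd_adj, expansionGraph, Subtype.ext_iff, eq_comm]

theorem toPrism_comp_prismEmbedding :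
    toPrism G S₁ S₂ ∘ prismEmbedding G S₁ S₂ = Prod.map id Subtype.val := by
  ext ⟨_ | _, w⟩ <;> rfl

def straddlingCubes (i : ℕ) : Set (Set (↥S₁ ⊕ ↥S₂)) :=
  {S ∈ cubeSets (expansionGraph G S₁ S₂) i |
    ¬S ⊆ Set.range Sum.inl ∧ ¬S ⊆ Set.range Sum.inr}

theorem mem_straddlingCubes_iff {S : Set (↥S₁ ⊕ ↥S₂)} :
    S ∈ straddlingCubes G S₁ S₂ i ↔ ∃ m T, i = m + 1 ∧ T ∈ cubeSets (G.induce (S₁ ∩ S₂)) m ∧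
      S = prismEmbedding G S₁ S₂ '' (Set.univ ×ˢ T) := by
  constructor
  · rintro ⟨hS, hl, hr⟩
    obtain ⟨x, hxS, hx⟩ := Set.not_subset.1 hl
    obtain ⟨y, hyS, hy⟩ := Set.not_subset.1 hr
    have hxy : (toPrism G S₁ S₂ x).1 ≠ (toPrism G S₁ S₂ y).1 := by
      rcases x with u | u <;> rcases y with v | v <;> simp_all
    obtain ⟨m, T', rfl, hT', hST⟩ := exists_eq_univ_prod_of_mem_cubeSets
      ((toPrism G S₁ S₂).image_mem_cubeSets hS) ⟨_, ⟨x, hxS, rfl⟩, _, ⟨y, hyS, rfl⟩, hxy⟩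
    have hT'sub : T' ⊆ Set.range (Embedding.induce (G := G) (S₁ ∩ S₂)) := by
      intro v hv
      have h (b : Bool) : (b, v) ∈ Set.range (toPrism G S₁ S₂) :=
        Set.image_subset_range _ S (hST ▸ Set.mk_mem_prod trivial hv)
      simp only [range_toPrism] at h
      exact ⟨⟨v, by simpa using h false, by simpa using h true⟩, rfl⟩
    obtain ⟨T, hT, rfl⟩ := (Embedding.induce (G := G) (S₁ ∩ S₂)).image_cubeSets.symm.subset
      ⟨hT', hT'sub⟩
    refine ⟨m, T, rfl, hT, Set.image_injective.2 (toPrism G S₁ S₂).injective ?_⟩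
    rw [hST, ← Set.image_comp, toPrism_comp_prismEmbedding, Set.prodMap_image_prod, Set.image_id]
    rfl
  · rintro ⟨m, T, rfl, hT, rfl⟩
    obtain ⟨w, hw⟩ := nonempty_of_mem_cubeSets hT
    refine ⟨(prismEmbedding G S₁ S₂).image_mem_cubeSets (univ_prod_mem_cubeSets hT), ?_, ?_⟩
    · intro h
      obtain ⟨_, h⟩ := h ⟨(true, w), ⟨trivial, hw⟩, rfl⟩
      cases h
    · intro h
      obtain ⟨_, h⟩ := h ⟨(false, w), ⟨trivial, hw⟩, rfl⟩
      cases h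

theorem straddlingCubes_zero : straddlingCubes G S₁ S₂ 0 = ∅ := by
  ext S
  simp [mem_straddlingCubes_iff]

theorem ncard_straddlingCubes_succ (m : ℕ) :
    (straddlingCubes G S₁ S₂ (m + 1)).ncard = cubeCount (G.induce (S₁ ∩ S₂)) m := by
  have hprod : Function.Injective fun T : Set ↥(S₁ ∩ S₂) ↦ (Set.univ : Set Bool) ×ˢ T :=
    fun T T' h ↦ Set.ext fun w ↦ by simpa using Set.ext_iff.1 h (false, w)
  have : straddlingCubes G S₁ S₂ (m + 1) =
      (fun T ↦ prismEmbedding G S₁ S₂ '' (Set.univ ×ˢ T)) '' cubeSets (G.induce (S₁ ∩ S₂)) m := by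
    ext S
    simp [mem_straddlingCubes_iff, eq_comm]
  rw [this, cubeCount_eq_ncard]
  exact Set.ncard_image_of_injective _
    ((Set.image_injective.2 (prismEmbedding G S₁ S₂).injective).comp hprod)

theorem cubeCount_eq [Finite V] (i : ℕ) :
    cubeCount (expansionGraph G S₁ S₂) i = cubeCount (G.induce S₁) i + cubeCount (G.induce S₂) i +
      (straddlingCubes G S₁ S₂ i).ncard := by
  have hsplit : cubeSets (expansionGraph G S₁ S₂) i =
      {S ∈ cubeSets (expansionGraph G S₁ S₂) i | S ⊆ Set.range Sum.inl} ∪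
        {S ∈ cubeSets (expansionGraph G S₁ S₂) i | S ⊆ Set.range Sum.inr} ∪
        straddlingCubes G S₁ S₂ i := by
    ext S
    simp only [straddlingCubes, Set.mem_union, Set.mem_ofPred_eq]
    tauto
  rw [cubeCount_eq_ncard, hsplit, Set.ncard_union_eq, Set.ncard_union_eq,
    (inlEmbedding G S₁ S₂).cubeCount_eq, (inrEmbedding G S₁ S₂).cubeCount_eq]
  · rfl
  · refine Set.disjoint_left.2 fun S ⟨hS, hl⟩ ⟨_, hr⟩ ↦ ?_
    obtain ⟨x, hx⟩ := nonempty_of_mem_cubeSets hS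
    exact Set.isCompl_range_inl_range_inr.disjoint.notMem_of_mem_left (hl hx) (hr hx)
  · exact Set.disjoint_left.2 fun S hS hD ↦ hS.elim (hD.2.1 ·.2) (hD.2.2 ·.2)

end expansionGraph

theorem cubePoly_expansion_general {V : Type*} [Fintype V] (G : SimpleGraph V)
    (S₁ S₂ : Set V) :
    cubePoly (expansionGraph G S₁ S₂) =
      cubePoly (G.induce S₁) + cubePoly (G.induce S₂) +
        Polynomial.X * cubePoly (G.induce (S₁ ∩ S₂)) := by
  ext (_ | m)
  · simp [coeff_cubePoly, expansionGraph.cubeCount_eq, expansionGraph.straddlingCubes_zero]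
  · simp [coeff_cubePoly, expansionGraph.cubeCount_eq, expansionGraph.ncard_straddlingCubes_succ,
      coeff_X_mul]

/-- If `{G₁, G₂}` is a cubical cover of a finite simple graph
`G` (with `G₁ = G.induce S₁`, `G₂ = G.induce S₂` and `G₀` induced on
`S₁ ∩ S₂`), and `G*` is the expansion of `G` with respect to `{G₁, G₂}`, then
`C(G*, x) = C(G₁, x) + C(G₂, x) + x·C(G₀, x)`. -/
theorem cubePoly_expansion {V : Type*} [Fintype V] (G : SimpleGraph V)
    (S₁ S₂ : Set V) (hcover : S₁ ∪ S₂ = Set.univ)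
    (hedge : ∀ e ∈ G.edgeSet, (∀ v ∈ e, v ∈ S₁) ∨ (∀ v ∈ e, v ∈ S₂))
    (hcube : ∀ (S : Set V) (i : ℕ),
      Nonempty (G.induce S ≃g cubeGraph i) → S ⊆ S₁ ∨ S ⊆ S₂) :
    cubePoly (expansionGraph G S₁ S₂) =
      cubePoly (G.induce S₁) + cubePoly (G.induce S₂) +
        Polynomial.X * cubePoly (G.induce (S₁ ∩ S₂)) :=
  cubePoly_expansion_general G S₁ S₂
end
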